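/- arXiv:2410.02494 — 9 statements merged into one kernel-verified Lean document; each statement's English description precedes it below -/
import Mathlib

section
/- Let A be an r×r real matrix and let T be the (r−1)×r matrix whose first column is the all-ones vector 𝟙_{r−1} and whose remaining (r−1)×(r−1) block is −Id_{r−1}. Then det(T · A · Tᵀ) = 𝟙_rᵀ · adj(A) · 𝟙_r, i.e., the determinant of T A Tᵀ equals the sum of all entries of the adjugate of A. -/
/-!
Complete `T` to the square matrix `G` whose first row is `e₀` and whose other rows are those of
`T`. Since the rows of `T` are orthogonal to `𝟙`, we have `G 𝟙 = e₀`, hence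
`adj G e₀ = adj G G 𝟙 = det G • 𝟙`: the first column of `adj G` is constant, equal to `det G`.
Now `T A Tᵀ` is the `(0,0)` minor of `G A Gᵀ`, so its determinant is the `(0,0)` entry of
`adj (G A Gᵀ) = (adj G)ᵀ (adj A) (adj G)`, which is `(det G)² 𝟙ᵀ (adj A) 𝟙`.
-/

open Matrix BigOperators

namespace Matrix

variable {n R : Type*} [Fintype n] [CommRing R]

theorem transpose_mul_mul_apply_of_col_eq (H B : Matrix n n R) (j : n) (c : R)
    (hH : ∀ k, H k j = c) : (Hᵀ * B * H) j j = c ^ 2 * ∑ s, ∑ t, B s t := by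
  simp only [mul_apply, transpose_apply, hH, Finset.mul_sum, Finset.sum_mul]
  rw [Finset.sum_comm]
  exact Finset.sum_congr rfl fun _ _ => Finset.sum_congr rfl fun _ _ => by ring

variable [DecidableEq n]

theorem adjugate_apply_eq_det_of_mulVec_one_eq_single (G : Matrix n n R) (j : n)
    (hG : G *ᵥ 1 = Pi.single j 1) (k : n) : G.adjugate k j = G.det := by
  have h := congrArg (G.adjugate *ᵥ ·) hG
  simp only [mulVec_mulVec, adjugate_mul, smul_mulVec, one_mulVec, mulVec_single_one] at h
  simpa using congrFun h.symm k

theorem det_submatrix_succ_succ {m : ℕ} (M : Matrix (Fin (m + 1)) (Fin (m + 1)) R) :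
    (M.submatrix Fin.succ Fin.succ).det = M.adjugate 0 0 := by
  simp [adjugate_fin_succ_eq_det_submatrix, Fin.succAbove_zero]

theorem det_mul_mul_transpose_of_mulVec_one_eq_zero {m : ℕ}
    (T : Matrix (Fin m) (Fin (m + 1)) R) (A : Matrix (Fin (m + 1)) (Fin (m + 1)) R)
    (hT : T *ᵥ 1 = 0) :
    (T * A * Tᵀ).det = (T.submatrix id Fin.succ).det ^ 2 * ∑ s, ∑ t, A.adjugate s t := by
  set G : Matrix (Fin (m + 1)) (Fin (m + 1)) R := vecCons (Pi.single 0 1) T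
  have hGT : G.submatrix Fin.succ id = T := rfl
  have hG_one : G *ᵥ 1 = Pi.single 0 1 := by
    ext i
    refine Fin.cases ?_ (fun i => ?_) i
    · simp [G, mulVec, dotProduct]
    · exact congrFun hT i
  have hdetG : G.det = (T.submatrix id Fin.succ).det := by
    rw [det_succ_row_zero, Fin.sum_univ_succ]
    simp [G, Fin.succ_ne_zero]
    rfl
  have hminor : T * A * Tᵀ = (G * A * Gᵀ).submatrix Fin.succ Fin.succ := by
    rw [← hGT, transpose_submatrix, submatrix_mul _ _ _ id _ Function.bijective_id,
      submatrix_mul _ _ _ id _ Function.bijective_id, submatrix_id_id]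
  rw [hminor, det_submatrix_succ_succ, adjugate_mul_distrib, adjugate_mul_distrib,
    ← adjugate_transpose, ← Matrix.mul_assoc, ← hdetG]
  exact transpose_mul_mul_apply_of_col_eq _ _ 0 _
    (adjugate_apply_eq_det_of_mulVec_one_eq_single G 0 hG_one)

end Matrix

/-- **Determinant Lemma.** Let `A` be an `r × r` real matrix and `T` the
`(r-1) × r` matrix whose first column is all ones and whose remaining block is
`-Id_{r-1}`.  Then `det (T * A * Tᵀ)` equals the sum of all entries of the
adjugate of `A`. -/
theorem determinant_lemma (r : ℕ) (hr : 1 ≤ r) (A : Matrix (Fin r) (Fin r) ℝ)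
    (T : Matrix (Fin (r - 1)) (Fin r) ℝ)
    (hT : ∀ i j, T i j =
      if (j : ℕ) = 0 then 1 else if (j : ℕ) = (i : ℕ) + 1 then -1 else 0) :
    (T * A * Tᵀ).det = ∑ s, ∑ t, A.adjugate s t := by
  obtain ⟨m, rfl⟩ : ∃ m, r = m + 1 := ⟨r - 1, (Nat.succ_pred_eq_of_pos hr).symm⟩
  change Matrix (Fin m) (Fin (m + 1)) ℝ at T
  have hT_one : T *ᵥ 1 = 0 := by
    ext i
    simp [mulVec, dotProduct, hT, Fin.sum_univ_succ, Fin.val_succ, Fin.val_inj]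
  have hT_tail : T.submatrix id Fin.succ = -1 := by
    ext i j
    simp only [submatrix_apply, id_eq, hT, Fin.val_succ]
    split_ifs <;> simp_all [Fin.val_inj, eq_comm]
  rw [det_mul_mul_transpose_of_mulVec_one_eq_zero T A hT_one, hT_tail, det_neg, det_one,
    mul_one, pow_right_comm, neg_one_sq, one_pow, one_mul]
end

section
/- Let M be an r×r real matrix written in block form M = [[M₁, A],[B, M₂]] with M₁ of size a×a (0 ≤ a ≤ r), and let N = adj(M) = [[N₁, C],[D, N₂]] with N₂ of size (r−a)×(r−a). Then (det M)·(det N₂) = (det M₁)·(det M)^{r−a}. -/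
open Matrix

/-- Claim (i) in the Sorted Extension Lemma: if `M = [[M₁, A], [B, M₂]]` with
`M₁` of size `a × a`, and `N₂` is the bottom-right `(r-a) × (r-a)` block of
`adj M`, then `det M * det N₂ = det M₁ * (det M)^(r-a)`. -/
theorem det_adjugate_block (a b : ℕ)
    (M₁ : Matrix (Fin a) (Fin a) ℝ) (A : Matrix (Fin a) (Fin b) ℝ)
    (B : Matrix (Fin b) (Fin a) ℝ) (M₂ : Matrix (Fin b) (Fin b) ℝ)
    (M : Matrix (Fin a ⊕ Fin b) (Fin a ⊕ Fin b) ℝ)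
    (hM : M = Matrix.fromBlocks M₁ A B M₂)
    (N₂ : Matrix (Fin b) (Fin b) ℝ)
    (hN₂ : ∀ i j, N₂ i j = M.adjugate (Sum.inr i) (Sum.inr j)) :
    M.det * N₂.det = M₁.det * M.det ^ b := by
  set N := M.adjugate with hN
  set C := N.toBlocks₁₂ with hC
  have hN2 : N₂ = N.toBlocks₂₂ := by
    ext i j; simp [hN₂, toBlocks₂₂, hN]
  have hmul : M * N = fromBlocks (M.det • 1) 0 0 (M.det • 1) := by
    rw [hN, mul_adjugate, ← fromBlocks_one]
    ext (i|i) (j|j) <;> simp [fromBlocks]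
  have hmul2 : M * N = fromBlocks (M₁ * N.toBlocks₁₁ + A * N.toBlocks₂₁)
      (M₁ * C + A * N₂) (B * N.toBlocks₁₁ + M₂ * N.toBlocks₂₁)
      (B * C + M₂ * N₂) := by
    conv_lhs => rw [hM, ← fromBlocks_toBlocks N, fromBlocks_multiply]
    rw [hN2, hC]
  have h12 : M₁ * C + A * N₂ = 0 := by
    have := hmul2.symm.trans hmul
    have := congrArg Matrix.toBlocks₁₂ this
    simpa [toBlocks_fromBlocks₁₂] using this
  have h22 : B * C + M₂ * N₂ = M.det • 1 := by
    have := hmul2.symm.trans hmul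
    have := congrArg Matrix.toBlocks₂₂ this
    simpa [toBlocks_fromBlocks₂₂] using this
  have key : M * fromBlocks 1 C 0 N₂ = fromBlocks M₁ 0 B (M.det • 1) := by
    rw [hM, fromBlocks_multiply, h12, h22, ← hM]
    simp
  have := congrArg Matrix.det key
  rw [det_mul, det_fromBlocks_zero₂₁, det_fromBlocks_zero₁₂] at this
  simpa [det_smul, mul_comm] using this
end

section
/- Let M be an r×r real matrix written in block form M = [[M₁, A],[B, M₂]] with M₁ of size a×a (0 < a < r), and let N = adj(M) = [[N₁, C],[D, N₂]]. Then (det M) · C · adj(N₂) = −(det M)^{r−a} · adj(M₁) · A. -/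
open Matrix Polynomial

/-- The key generic identity, proved over an arbitrary integral domain under the
assumption `det M₁ ≠ 0`. -/
lemma adjugate_block_identity_aux {R : Type*} [CommRing R] [IsDomain R]
    {m n : Type*} [Fintype m] [Fintype n] [DecidableEq m] [DecidableEq n]
    (M₁ : Matrix m m R) (A : Matrix m n R) (B : Matrix n m R) (M₂ : Matrix n n R)
    (h₁ : M₁.det ≠ 0) :
    (fromBlocks M₁ A B M₂).det •
        ((fromBlocks M₁ A B M₂).adjugate.toBlocks₁₂ *
          ((fromBlocks M₁ A B M₂).adjugate.toBlocks₂₂).adjugate) =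
      (-((fromBlocks M₁ A B M₂).det ^ Fintype.card n)) • (M₁.adjugate * A) := by
  set M := fromBlocks M₁ A B M₂ with hM
  set N := M.adjugate with hN
  set C := N.toBlocks₁₂ with hC
  set N₂ := N.toBlocks₂₂ with hN₂
  have hNblocks : N = fromBlocks N.toBlocks₁₁ C N.toBlocks₂₁ N₂ := (fromBlocks_toBlocks N).symm
  have hmul : M * N = M.det • 1 := mul_adjugate M
  rw [hNblocks, hM, fromBlocks_multiply, ← fromBlocks_one, fromBlocks_smul] at hmul
  have e12 : M₁ * C + A * N₂ = 0 := by
    have := congrArg Matrix.toBlocks₁₂ hmul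
    simpa [toBlocks_fromBlocks₁₂] using this
  have e22 : B * C + M₂ * N₂ = M.det • 1 := by
    have := congrArg Matrix.toBlocks₂₂ hmul
    simpa [toBlocks_fromBlocks₂₂] using this
  -- Jacobi-type determinant identity : det M * det N₂ = det M₁ * (det M)^n
  have hdet : M.det * N₂.det = M₁.det * M.det ^ Fintype.card n := by
    have hMP : M * fromBlocks 1 C 0 N₂ = fromBlocks M₁ 0 B (M.det • 1) := by
      rw [hM, fromBlocks_multiply]
      congr 1 <;> simp [e12, e22]
    have := congrArg Matrix.det hMP
    rw [det_mul, det_fromBlocks_zero₂₁, det_fromBlocks_zero₁₂, det_one, one_mul,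
      det_smul, det_one, mul_one] at this
    simpa using this
  -- From `A * N₂ = -(M₁ * C)`, multiply on the right by `adj N₂` and on the left by `adj M₁`.
  have h1 : A * N₂ = -(M₁ * C) := by
    rw [eq_neg_iff_add_eq_zero, add_comm]; exact e12
  have h2 : N₂.det • A = -(M₁ * (C * N₂.adjugate)) := by
    have := congrArg (· * N₂.adjugate) h1
    simpa [Matrix.mul_assoc, mul_adjugate, Matrix.mul_smul, Matrix.smul_mul] using this
  have h3 : N₂.det • (M₁.adjugate * A) = -(M₁.det • (C * N₂.adjugate)) := by
    have := congrArg (M₁.adjugate * ·) h2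
    simpa [Matrix.mul_smul, Matrix.mul_neg, ← Matrix.mul_assoc, adjugate_mul,
      Matrix.smul_mul] using this
  ext i j
  have h5 := congrFun (congrFun h3 i) j
  simp only [Matrix.smul_apply, Matrix.neg_apply, smul_eq_mul] at h5
  simp only [Matrix.smul_apply, smul_eq_mul]
  refine mul_left_cancel₀ h₁ ?_
  linear_combination M.det * h5 - ((M₁.adjugate * A) i j) * hdet

/-- Claim (ii) in the Sorted Extension Lemma: if `M = [[M₁, A], [B, M₂]]` with
`M₁` of size `a × a` (`0 < a`, `0 < b = r - a`), `N = adj M = [[N₁, C], [D, N₂]]`,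
then `(det M) • (C * adj N₂) = -(det M)^(r-a) • (adj M₁ * A)`,
with no invertibility assumption on `M₁`. -/
theorem adjugate_block_identity (a b : ℕ) (ha : 0 < a) (hb : 0 < b)
    (M₁ : Matrix (Fin a) (Fin a) ℝ) (A : Matrix (Fin a) (Fin b) ℝ)
    (B : Matrix (Fin b) (Fin a) ℝ) (M₂ : Matrix (Fin b) (Fin b) ℝ)
    (M : Matrix (Fin a ⊕ Fin b) (Fin a ⊕ Fin b) ℝ)
    (hM : M = Matrix.fromBlocks M₁ A B M₂)
    (C : Matrix (Fin a) (Fin b) ℝ)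
    (hC : ∀ i j, C i j = M.adjugate (Sum.inl i) (Sum.inr j))
    (N₂ : Matrix (Fin b) (Fin b) ℝ)
    (hN₂ : ∀ i j, N₂ i j = M.adjugate (Sum.inr i) (Sum.inr j)) :
    M.det • (C * N₂.adjugate) = (-(M.det ^ b)) • (M₁.adjugate * A) := by
  classical
  -- identify C and N₂ with blocks of the adjugate
  have hCb : C = M.adjugate.toBlocks₁₂ := by ext i j; exact hC i j
  have hN₂b : N₂ = M.adjugate.toBlocks₂₂ := by ext i j; exact hN₂ i j
  subst hM
  -- Work over the polynomial ring ℝ[X], perturbing M₁ to the invertible charmatrix (-M₁).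
  set φ : ℝ[X] →+* ℝ := Polynomial.evalRingHom (0 : ℝ) with hφ
  set M₁' : Matrix (Fin a) (Fin a) ℝ[X] := charmatrix (-M₁) with hM₁'
  have hdet₁ : M₁'.det ≠ 0 := (charpoly_monic (-M₁)).ne_zero
  have key := adjugate_block_identity_aux M₁' (A.map Polynomial.C)
    (B.map Polynomial.C) (M₂.map Polynomial.C) hdet₁
  -- mapping everything down along `eval 0 : ℝ[X] → ℝ`
  have hmapM₁ : M₁'.map φ = M₁ := by
    ext i j
    by_cases h : i = j
    · subst h; simp [hM₁', charmatrix_apply_eq, hφ]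
    · simp [hM₁', charmatrix_apply_ne _ _ _ h, hφ]
  have hid : ∀ {p q : ℕ} (X : Matrix (Fin p) (Fin q) ℝ), (X.map Polynomial.C).map φ = X := by
    intro p q X; ext i j; simp [hφ]
  have hmapM : (fromBlocks M₁' (A.map Polynomial.C) (B.map Polynomial.C)
      (M₂.map Polynomial.C)).map φ = fromBlocks M₁ A B M₂ := by
    rw [fromBlocks_map, hmapM₁, hid, hid, hid]
  set M' := fromBlocks M₁' (A.map Polynomial.C) (B.map Polynomial.C) (M₂.map Polynomial.C)
    with hM'
  have hmapdet : φ M'.det = (fromBlocks M₁ A B M₂).det := by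
    rw [RingHom.map_det, RingHom.mapMatrix_apply, hmapM]
  have hmapadj : M'.adjugate.map φ = (fromBlocks M₁ A B M₂).adjugate := by
    have := RingHom.map_adjugate φ M'
    rw [RingHom.mapMatrix_apply, RingHom.mapMatrix_apply, hmapM] at this
    exact this
  have hmapC : (M'.adjugate.toBlocks₁₂).map φ = C := by
    rw [hCb, ← hmapadj]; ext i j; simp [Matrix.toBlocks₁₂]
  have hmapN₂ : (M'.adjugate.toBlocks₂₂).map φ = N₂ := by
    rw [hN₂b, ← hmapadj]; ext i j; simp [Matrix.toBlocks₂₂]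
  -- apply `map φ` to the key identity
  have key' := congrArg (fun X => X.map φ) key
  simp only [Fintype.card_fin] at key'
  rw [show ∀ (r : ℝ[X]) (X : Matrix (Fin a) (Fin b) ℝ[X]), (r • X).map φ = φ r • X.map φ by
      intro r X; ext i j; simp [Matrix.smul_apply]] at key'
  rw [show ∀ (r : ℝ[X]) (X : Matrix (Fin a) (Fin b) ℝ[X]), (r • X).map φ = φ r • X.map φ by
      intro r X; ext i j; simp [Matrix.smul_apply]] at key'
  rw [Matrix.map_mul, Matrix.map_mul] at key'
  have hadjN₂ : ((M'.adjugate.toBlocks₂₂).adjugate).map φ = N₂.adjugate := by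
    have := RingHom.map_adjugate φ (M'.adjugate.toBlocks₂₂)
    rw [RingHom.mapMatrix_apply, RingHom.mapMatrix_apply, hmapN₂] at this
    exact this
  have hadjM₁ : M₁'.adjugate.map φ = M₁.adjugate := by
    have := RingHom.map_adjugate φ M₁'
    rw [RingHom.mapMatrix_apply, RingHom.mapMatrix_apply, hmapM₁] at this
    exact this
  rw [hmapC, hadjN₂, hadjM₁] at key'
  rw [hid] at key'
  rw [map_neg, map_pow, hmapdet] at key'
  exact key'
end

section
/- Let M be an r×r real matrix written in block form M = [[M₁, A],[B, M₂]] with M₁ of size a×a, and let N = adj(M) = [[N₁, C],[D, N₂]]. Then (det M)^{r−a}·(det M₁)·Id_r = (det M)^{r−a} · E₁ · M + (det M) · N · E₂, where E₁ is the r×r matrix with top-left block adj(M₁) and all other blocks zero, and E₂ is the r×r matrix with bottom-right block adj(N₂) and all other blocks zero. -/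
open Matrix

private theorem sel_core {R : Type*} [CommRing R] [IsDomain R] (a b : ℕ)
    (M₁ : Matrix (Fin a) (Fin a) R) (A : Matrix (Fin a) (Fin b) R)
    (B : Matrix (Fin b) (Fin a) R) (M₂ : Matrix (Fin b) (Fin b) R)
    (h1 : M₁.det ≠ 0)
    (M : Matrix (Fin a ⊕ Fin b) (Fin a ⊕ Fin b) R)
    (hM : M = Matrix.fromBlocks M₁ A B M₂)
    (N₂ : Matrix (Fin b) (Fin b) R)
    (hN₂ : N₂ = Matrix.of fun i j => M.adjugate (Sum.inr i) (Sum.inr j)) :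
    (M.det ^ b * M₁.det) • (1 : Matrix (Fin a ⊕ Fin b) (Fin a ⊕ Fin b) R)
      = (M.det ^ b) • (Matrix.fromBlocks M₁.adjugate 0 0 0 * M)
        + M.det • (M.adjugate * Matrix.fromBlocks 0 0 0 N₂.adjugate) := by
  set N₁ : Matrix (Fin a) (Fin a) R := Matrix.of fun i j => M.adjugate (Sum.inl i) (Sum.inl j) with hN₁
  set C' : Matrix (Fin a) (Fin b) R := Matrix.of fun i j => M.adjugate (Sum.inl i) (Sum.inr j) with hC'
  set D : Matrix (Fin b) (Fin a) R := Matrix.of fun i j => M.adjugate (Sum.inr i) (Sum.inl j) with hD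
  have hN : M.adjugate = fromBlocks N₁ C' D N₂ := by
    ext (i | i) (j | j) <;> simp [hN₁, hC', hD, hN₂]
  have hMN : fromBlocks M₁ A B M₂ * fromBlocks N₁ C' D N₂ = M.det • 1 := by
    rw [← hM, ← hN]; exact mul_adjugate M
  have hNM : fromBlocks N₁ C' D N₂ * fromBlocks M₁ A B M₂ = M.det • 1 := by
    rw [← hM, ← hN]; exact adjugate_mul M
  rw [fromBlocks_multiply, ← fromBlocks_one, fromBlocks_smul] at hMN hNM
  obtain ⟨-, e12, -, -⟩ := fromBlocks_inj.mp hMN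
  obtain ⟨-, -, e21, e22⟩ := fromBlocks_inj.mp hNM
  rw [smul_zero] at e12 e21
  have key : N₂.det * M.det = M₁.det * M.det ^ b := by
    have hprod : fromBlocks (1 : Matrix (Fin a) (Fin a) R) 0 D N₂ * fromBlocks M₁ A B M₂
        = fromBlocks M₁ A 0 (M.det • 1) := by
      rw [fromBlocks_multiply, e21, e22]
      simp
    have := congrArg Matrix.det hprod
    rw [det_mul, det_fromBlocks_zero₁₂, det_fromBlocks_zero₂₁, det_one, one_mul,
      det_smul, det_one, mul_one, Fintype.card_fin] at this
    rw [← hM] at this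
    exact this
  have h2 : M₁.det • C' = -(M₁.adjugate * (A * N₂)) := by
    have : M₁.adjugate * (M₁ * C') = M₁.adjugate * (-(A * N₂)) := by
      rw [eq_neg_of_add_eq_zero_left e12]
    rw [← Matrix.mul_assoc, adjugate_mul, Matrix.smul_mul, Matrix.one_mul,
      Matrix.mul_neg] at this
    exact this
  have h3 : M₁.det • (C' * N₂.adjugate) = -(N₂.det • (M₁.adjugate * A)) := by
    have := congrArg (· * N₂.adjugate) h2
    simp only [Matrix.smul_mul, Matrix.neg_mul] at this
    rw [Matrix.mul_assoc, Matrix.mul_assoc, mul_adjugate, Matrix.mul_smul,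
      Matrix.mul_one, Matrix.mul_smul] at this
    exact this
  have h5 : M.det • (C' * N₂.adjugate) = -(M.det ^ b • (M₁.adjugate * A)) := by
    have h4 : M₁.det • (M.det • (C' * N₂.adjugate))
        = M₁.det • (-(M.det ^ b • (M₁.adjugate * A))) := by
      rw [smul_comm, h3, smul_neg, smul_neg, smul_smul, smul_smul, mul_comm M.det, key]
    ext i j
    have := congrFun (congrFun h4 i) j
    simp only [Matrix.smul_apply, smul_eq_mul] at this ⊢
    exact mul_left_cancel₀ h1 this
  have hrhs1 : fromBlocks M₁.adjugate 0 0 0 * M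
      = fromBlocks (M₁.det • 1) (M₁.adjugate * A) 0 0 := by
    rw [hM, fromBlocks_multiply, adjugate_mul]
    simp
  have hrhs2 : M.adjugate * fromBlocks 0 0 0 N₂.adjugate
      = fromBlocks 0 (C' * N₂.adjugate) 0 (N₂.det • 1) := by
    rw [hN, fromBlocks_multiply, mul_adjugate]
    simp
  rw [hrhs1, hrhs2, ← fromBlocks_one, fromBlocks_smul, fromBlocks_smul, fromBlocks_smul,
    fromBlocks_add]
  refine fromBlocks_inj.mpr ⟨?_, ?_, by simp, ?_⟩
  · simp [smul_smul, mul_comm]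
  · rw [smul_zero, h5, add_neg_cancel]
  · rw [smul_zero, zero_add, smul_smul, mul_comm M.det, key, mul_comm M₁.det]

private theorem sel_map_smul {n m : Type*} (φ : Polynomial ℝ →+* ℝ) (p : Polynomial ℝ)
    (P : Matrix n m (Polynomial ℝ)) : (p • P).map φ = φ p • P.map φ := by
  ext i j; simp

private theorem sel_map_add {n m : Type*} (φ : Polynomial ℝ →+* ℝ)
    (P Q : Matrix n m (Polynomial ℝ)) : (P + Q).map φ = P.map φ + Q.map φ := by
  ext i j; simp

private theorem sel_map_mul {n m k : Type*} [Fintype m] (φ : Polynomial ℝ →+* ℝ)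
    (P : Matrix n m (Polynomial ℝ)) (Q : Matrix m k (Polynomial ℝ)) :
    (P * Q).map φ = P.map φ * Q.map φ := by
  ext i j; simp [Matrix.mul_apply]

private theorem sel_map_adj {n : Type*} [Fintype n] [DecidableEq n] (φ : Polynomial ℝ →+* ℝ)
    (P : Matrix n n (Polynomial ℝ)) : P.adjugate.map φ = (P.map φ).adjugate := by
  have := φ.map_adjugate P
  simpa [RingHom.mapMatrix_apply] using this

private theorem sel_map_one {n : Type*} [Fintype n] [DecidableEq n] (φ : Polynomial ℝ →+* ℝ) :
    (1 : Matrix n n (Polynomial ℝ)).map φ = 1 :=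
  Matrix.map_one φ φ.map_zero φ.map_one


/-- **Sorted Extension Lemma.** For `M = [[M₁, A], [B, M₂]]` (`M₁` of size `a × a`,
`M₂` of size `b × b`, `r = a + b`) and `N = adj M = [[N₁, C], [D, N₂]]`,
`(det M)^(r-a) (det M₁) Id_r = (det M)^(r-a) E₁ M + (det M) N E₂`, where
`E₁` has top-left block `adj M₁` and zeros elsewhere, and `E₂` has bottom-right
block `adj N₂` and zeros elsewhere. -/
theorem sorted_extension_lemma (a b : ℕ)
    (M₁ : Matrix (Fin a) (Fin a) ℝ) (A : Matrix (Fin a) (Fin b) ℝ)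
    (B : Matrix (Fin b) (Fin a) ℝ) (M₂ : Matrix (Fin b) (Fin b) ℝ)
    (M : Matrix (Fin a ⊕ Fin b) (Fin a ⊕ Fin b) ℝ)
    (hM : M = Matrix.fromBlocks M₁ A B M₂)
    (N₂ : Matrix (Fin b) (Fin b) ℝ)
    (hN₂ : ∀ i j, N₂ i j = M.adjugate (Sum.inr i) (Sum.inr j)) :
    (M.det ^ b * M₁.det) • (1 : Matrix (Fin a ⊕ Fin b) (Fin a ⊕ Fin b) ℝ)
      = (M.det ^ b) • (Matrix.fromBlocks M₁.adjugate 0 0 0 * M)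
        + M.det • (M.adjugate * Matrix.fromBlocks 0 0 0 N₂.adjugate) := by
  have hN₂' : N₂ = Matrix.of fun i j => M.adjugate (Sum.inr i) (Sum.inr j) := by
    ext i j; exact hN₂ i j
  let φ : Polynomial ℝ →+* ℝ := Polynomial.evalRingHom 0
  let M₁' : Matrix (Fin a) (Fin a) (Polynomial ℝ) :=
    M₁.map Polynomial.C + (Polynomial.X : Polynomial ℝ) • 1
  let M₂' : Matrix (Fin b) (Fin b) (Polynomial ℝ) :=
    M₂.map Polynomial.C + (Polynomial.X : Polynomial ℝ) • 1
  let M' := fromBlocks M₁' (A.map Polynomial.C) (B.map Polynomial.C) M₂'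
  let N₂' : Matrix (Fin b) (Fin b) (Polynomial ℝ) :=
    Matrix.of fun i j => M'.adjugate (Sum.inr i) (Sum.inr j)
  have h1 : M₁'.det ≠ 0 := by
    have h : M₁' = charmatrix (-M₁) := by
      ext i j
      by_cases h : i = j <;>
        simp [M₁', charmatrix_apply, Matrix.one_apply, Matrix.diagonal_apply, h, sub_eq_add_neg,
          add_comm]
    rw [h]
    exact (Matrix.charpoly_monic (-M₁)).ne_zero
  have hm1 : M₁'.map φ = M₁ := by ext i j; simp [M₁', φ]
  have hm2 : M₂'.map φ = M₂ := by ext i j; simp [M₂', φ]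
  have hA : (A.map Polynomial.C).map φ = A := by ext i j; simp [φ]
  have hB : (B.map Polynomial.C).map φ = B := by ext i j; simp [φ]
  have hM' : M'.map φ = M := by
    rw [hM]; simp [M', fromBlocks_map, hm1, hm2, hA, hB]
  have hN₂m : N₂'.map φ = N₂ := by
    rw [hN₂']
    ext i j
    simp only [Matrix.map_apply, Matrix.of_apply, N₂']
    rw [show φ (M'.adjugate (Sum.inr i) (Sum.inr j)) = (M'.adjugate.map φ) (Sum.inr i) (Sum.inr j)
      from rfl, sel_map_adj, hM']
  have E := sel_core a b M₁' (A.map Polynomial.C) (B.map Polynomial.C) M₂' h1 M' rfl N₂' rfl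
  have E2 : ((M'.det ^ b * M₁'.det) • (1 : Matrix (Fin a ⊕ Fin b) (Fin a ⊕ Fin b) (Polynomial ℝ))).map φ
      = ((M'.det ^ b) • (fromBlocks M₁'.adjugate 0 0 0 * M')
        + M'.det • (M'.adjugate * fromBlocks 0 0 0 N₂'.adjugate)).map φ := by rw [E]
  simp only [sel_map_add, sel_map_smul, sel_map_mul, sel_map_one, fromBlocks_map,
    sel_map_adj, Matrix.map_zero _ φ.map_zero, hM', hm1, hm2, hA, hB, hN₂m,
    _root_.map_mul, _root_.map_pow, RingHom.map_det, RingHom.mapMatrix_apply] at E2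
  rw [hM] at E2 ⊢
  exact E2
end

section
/- Let M be an invertible r×r real matrix, I ⊆ [r] with |I| = a, J = [r]\I, and N = adj(M). Then (det [M]_I)·M^{−1} − Ext_I(adj [M]_I) = (det M)^{−(r−a−1)} · N · Ext_J(adj [N]_J) · M^{−1}, where [A]_K denotes the principal submatrix of A indexed by K, and Ext_K(B) denotes the r×r matrix whose K×K principal submatrix is B and all other entries are 0. -/
/-!
Since `adj M = det M • M⁻¹`, taking the adjugate of `[adj M]_J` produces `(det M)^(|J| - 1)`, which
cancels the prefactor; conjugating by `M`, the claim becomes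
`det [M]_I • M - M * Ext_I (adj [M]_I) * M = det M • Ext_J (adj [M⁻¹]_J)`.
Write `M = [[A, B], [C, D]]` in blocks along `I ⊔ J`. When `A` is invertible, `adj A * A = det A`
kills every block of the left side except the `J × J` one, which is `det A • S` for the Schur
complement `S = D - C A⁻¹ B`; as `[M⁻¹]_J = S⁻¹` and `det M = det A * det S`, this is
`det M • adj [M⁻¹]_J`. For singular `A`, perturb `M` to `M + t • Ext_I 1`: then `det [M]_I` becomes
a nonzero polynomial in `t`, and both sides are continuous at `M`.
-/

open Matrix

/-- The principal submatrix of `A` on the index set `K`. -/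
def restr {r : ℕ} (K : Finset (Fin r)) (A : Matrix (Fin r) (Fin r) ℝ) :
    Matrix K K ℝ :=
  A.submatrix Subtype.val Subtype.val

/-- The extension of a `K × K` matrix to an `r × r` matrix by zeros. -/
def extM {r : ℕ} (K : Finset (Fin r)) (B : Matrix K K ℝ) :
    Matrix (Fin r) (Fin r) ℝ :=
  fun i j => if hi : i ∈ K then if hj : j ∈ K then B ⟨i, hi⟩ ⟨j, hj⟩ else 0 else 0

open Filter Topology

namespace Matrix

section CommRing

variable {R m n : Type*} [CommRing R] [Fintype m] [Fintype n] [DecidableEq m] [DecidableEq n]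

theorem adjugate_eq_det_smul_nonsing_inv {A : Matrix n n R} (hA : IsUnit A.det) :
    A.adjugate = A.det • A⁻¹ := by
  rw [nonsing_inv_apply _ hA, smul_smul, IsUnit.mul_val_inv, one_smul]

theorem det_fromBlocks_smul_adjugate_toBlocks₂₂_inv {A : Matrix m m R} {B : Matrix m n R}
    {C : Matrix n m R} {D : Matrix n n R} (hA : IsUnit A.det)
    (hW : IsUnit (fromBlocks A B C D).det) :
    (fromBlocks A B C D).det • (fromBlocks A B C D)⁻¹.toBlocks₂₂.adjugate
      = A.det • D - C * A.adjugate * B := by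
  let := A.invertibleOfIsUnitDet hA
  let := (fromBlocks A B C D).invertibleOfIsUnitDet hW
  let := invertibleOfFromBlocks₁₁Invertible A B C D
  have hS : IsUnit (D - C * A⁻¹ * B).det := by
    simpa only [invOf_eq_nonsing_inv] using isUnit_det_of_invertible (D - C * ⅟A * B)
  rw [← invOf_eq_nonsing_inv, invOf_fromBlocks₁₁_eq, toBlocks_fromBlocks₂₂, det_fromBlocks₁₁]
  simp only [invOf_eq_nonsing_inv]
  rw [adjugate_eq_det_smul_nonsing_inv (isUnit_nonsing_inv_det_iff.mpr hS),
    inv_inv_of_invertible, det_nonsing_inv, smul_smul, mul_assoc, Ring.mul_inverse_cancel _ hS,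
    mul_one, adjugate_eq_det_smul_nonsing_inv hA, smul_sub, Matrix.mul_smul, Matrix.smul_mul]

theorem det_smul_fromBlocks_sub_mul_adjugate_mul {A : Matrix m m R} {B : Matrix m n R}
    {C : Matrix n m R} {D : Matrix n n R} (hA : IsUnit A.det)
    (hW : IsUnit (fromBlocks A B C D).det) :
    A.det • fromBlocks A B C D
        - fromBlocks A B C D * fromBlocks A.adjugate 0 0 0 * fromBlocks A B C D
      = (fromBlocks A B C D).det •
          fromBlocks 0 0 0 (fromBlocks A B C D)⁻¹.toBlocks₂₂.adjugate := by
  rw [fromBlocks_smul, fromBlocks_smul, smul_zero,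
    det_fromBlocks_smul_adjugate_toBlocks₂₂_inv hA hW, fromBlocks_multiply, fromBlocks_multiply,
    sub_eq_add_neg, fromBlocks_neg, fromBlocks_add]
  simp [mul_adjugate, adjugate_mul, Matrix.mul_assoc, sub_eq_add_neg]

end CommRing

theorem eventually_nhdsNE_det_add_smul_one_ne_zero {K n : Type*} [Field K]
    [TopologicalSpace K] [T1Space K] [Fintype n] [DecidableEq n] (A : Matrix n n K) (x : K) :
    ∀ᶠ t in 𝓝[≠] x, (A + t • (1 : Matrix n n K)).det ≠ 0 := by
  have hroots := Polynomial.finite_setOfPred_isRoot (charpoly_monic (-A)).ne_zero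
  filter_upwards [nhdsNE_le_cofinite x hroots.compl_mem_cofinite] with t ht
  rwa [Set.mem_compl_iff, Set.mem_ofPred_eq, Polynomial.IsRoot.def, eval_charpoly,
    sub_neg_eq_add, add_comm, scalar_apply, ← smul_one_eq_diagonal] at ht

end Matrix

def Finset.sumComplEquiv {α : Type*} [Fintype α] [DecidableEq α] (I : Finset α) :
    I ⊕ ↥Iᶜ ≃ α :=
  (Equiv.sumCongr (Equiv.refl _) (Equiv.subtypeEquivRight fun _ => Finset.mem_compl)).trans
    (Equiv.sumCompl (· ∈ I))

section RestrExt

variable {r : ℕ} (K : Finset (Fin r))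

theorem restr_smul (c : ℝ) (A : Matrix (Fin r) (Fin r) ℝ) : restr K (c • A) = c • restr K A :=
  rfl

theorem restr_add (A B : Matrix (Fin r) (Fin r) ℝ) : restr K (A + B) = restr K A + restr K B :=
  rfl

theorem restr_extM (B : Matrix K K ℝ) : restr K (extM K B) = B := by
  ext i j
  simp [restr, extM]

theorem extM_smul (c : ℝ) (B : Matrix K K ℝ) : extM K (c • B) = c • extM K B := by
  ext i j
  by_cases hi : i ∈ K <;> by_cases hj : j ∈ K <;> simp [extM, hi, hj]

theorem extM_empty (B : Matrix (∅ : Finset (Fin r)) (∅ : Finset (Fin r)) ℝ) : extM ∅ B = 0 := by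
  ext i j
  simp [extM]

theorem continuous_restr : Continuous (restr K) :=
  continuous_id.matrix_submatrix _ _

theorem continuous_extM : Continuous (extM K) :=
  continuous_matrix fun i j => by
    unfold extM
    split_ifs <;> fun_prop

theorem zpow_smul_extM_adjugate_smul {c : ℝ} (hc : c ≠ 0) (B : Matrix K K ℝ) :
    c ^ (-((K.card : ℤ) - 1)) • extM K (c • B).adjugate = extM K B.adjugate := by
  rcases K.eq_empty_or_nonempty with rfl | hK
  · simp only [extM_empty, smul_zero]
  rw [adjugate_smul, Fintype.card_coe, extM_smul, smul_smul, ← zpow_natCast, ← zpow_add₀ hc,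
    Nat.cast_sub hK.card_pos, Nat.cast_one, neg_add_cancel, zpow_zero, one_smul]

theorem reindex_sumComplEquiv_symm (M : Matrix (Fin r) (Fin r) ℝ) :
    reindex K.sumComplEquiv.symm K.sumComplEquiv.symm M
      = fromBlocks (restr K M) (M.submatrix Subtype.val Subtype.val)
          (M.submatrix Subtype.val Subtype.val) (restr Kᶜ M) := by
  ext (i | i) (j | j) <;> rfl

theorem reindex_sumComplEquiv_symm_extM (B : Matrix K K ℝ) :
    reindex K.sumComplEquiv.symm K.sumComplEquiv.symm (extM K B) = fromBlocks B 0 0 0 := by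
  ext (i | i) (j | j) <;> simp [Finset.sumComplEquiv, extM, i.2, j.2, Finset.mem_compl.mp]

theorem reindex_sumComplEquiv_symm_extM_compl (B : Matrix ↥Kᶜ ↥Kᶜ ℝ) :
    reindex K.sumComplEquiv.symm K.sumComplEquiv.symm (extM Kᶜ B) = fromBlocks 0 0 0 B := by
  ext (i | i) (j | j) <;> simp [Finset.sumComplEquiv, extM, i.2, j.2, Finset.mem_compl.mp]

end RestrExt

section Extension

variable {r : ℕ} {M : Matrix (Fin r) (Fin r) ℝ}

theorem det_restr_smul_sub_mul_extM_adjugate_mul_of_isUnit {I : Finset (Fin r)}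
    (hM : IsUnit M.det) (hA : IsUnit (restr I M).det) :
    (restr I M).det • M - M * extM I (restr I M).adjugate * M
      = M.det • extM Iᶜ (restr Iᶜ M⁻¹).adjugate := by
  have hW : IsUnit (reindex I.sumComplEquiv.symm I.sumComplEquiv.symm M).det := by
    rwa [det_reindex_self]
  have key := det_smul_fromBlocks_sub_mul_adjugate_mul hA (reindex_sumComplEquiv_symm I M ▸ hW)
  rw [← reindex_sumComplEquiv_symm, inv_reindex, det_reindex_self] at key
  apply (reindexAlgEquiv ℝ ℝ I.sumComplEquiv.symm).injective
  simp only [map_sub, map_smul, map_mul, coe_reindexAlgEquiv, reindex_sumComplEquiv_symm_extM,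
    reindex_sumComplEquiv_symm_extM_compl]
  exact key

theorem det_restr_smul_sub_mul_extM_adjugate_mul (I : Finset (Fin r)) (hM : IsUnit M.det) :
    (restr I M).det • M - M * extM I (restr I M).adjugate * M
      = M.det • extM Iᶜ (restr Iᶜ M⁻¹).adjugate := by
  set F : Matrix (Fin r) (Fin r) ℝ → Matrix (Fin r) (Fin r) ℝ :=
    fun X => (restr I X).det • X - X * extM I (restr I X).adjugate * X
  set G : Matrix (Fin r) (Fin r) ℝ → Matrix (Fin r) (Fin r) ℝ :=
    fun X => X.det • extM Iᶜ (restr Iᶜ X⁻¹).adjugate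
  have hF : Continuous F := by
    have := continuous_restr I
    have := continuous_extM I
    fun_prop
  have hG : ContinuousAt G M := by
    have hinv : ContinuousAt Inv.inv M :=
      continuousAt_matrix_inv M (Ring.inverse_eq_inv' (G₀ := ℝ) ▸ continuousAt_inv₀ hM.ne_zero)
    have hext : Continuous fun B : Matrix ↥Iᶜ ↥Iᶜ ℝ => extM Iᶜ B.adjugate :=
      (continuous_extM Iᶜ).comp continuous_id.matrix_adjugate
    exact continuous_id.matrix_det.continuousAt.smul
      (hext.continuousAt.comp ((continuous_restr Iᶜ).continuousAt.comp hinv))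
  set φ : ℝ → Matrix (Fin r) (Fin r) ℝ := fun t => M + t • extM I 1
  have hφ : Continuous φ := by fun_prop
  have hφ0 : φ 0 = M := by simp [φ]
  have hφM : Tendsto φ (𝓝[≠] 0) (𝓝 M) :=
    hφ0 ▸ hφ.continuousAt.tendsto.mono_left nhdsWithin_le_nhds
  have hFG : F ∘ φ =ᶠ[𝓝[≠] 0] G ∘ φ := by
    have hdet : ∀ᶠ t in 𝓝 (0 : ℝ), (φ t).det ≠ 0 :=
      hφ.matrix_det.continuousAt.eventually_ne (by simpa [hφ0] using hM.ne_zero)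
    filter_upwards [nhdsWithin_le_nhds hdet,
      eventually_nhdsNE_det_add_smul_one_ne_zero (restr I M) 0] with t ht htI
    rw [← restr_extM I 1, ← restr_smul, ← restr_add] at htI
    exact det_restr_smul_sub_mul_extM_adjugate_mul_of_isUnit ht.isUnit htI.isUnit
  exact tendsto_nhds_unique ((hF.tendsto M).comp hφM) ((hG.tendsto.comp hφM).congr' hFG.symm)

end Extension

/-- **Extension Lemma.** For invertible `M ∈ ℝ^{r×r}`, `I ⊆ [r]` with `|I| = a`,
`J = [r] \ I` and `N = adj M`:
`(det [M]_I) M⁻¹ − Ext_I(adj [M]_I) = (det M)^{-(r-a-1)} N · Ext_J(adj [N]_J) · M⁻¹`. -/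
theorem extension_lemma (r : ℕ) (M : Matrix (Fin r) (Fin r) ℝ)
    (hM : IsUnit M.det) (I : Finset (Fin r)) :
    (restr I M).det • M⁻¹ - extM I (restr I M).adjugate
      = (M.det ^ (-((r : ℤ) - (I.card : ℤ) - 1))) •
          (M.adjugate * extM Iᶜ (restr Iᶜ M.adjugate).adjugate * M⁻¹) := by
  have hcard : (r : ℤ) - I.card = Iᶜ.card := by
    have := I.card_add_card_compl
    simp only [Fintype.card_fin] at this
    omega
  calc (restr I M).det • M⁻¹ - extM I (restr I M).adjugate
      = M⁻¹ * ((restr I M).det • M - M * extM I (restr I M).adjugate * M) * M⁻¹ := by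
        simp only [Matrix.mul_sub, Matrix.sub_mul, Matrix.mul_smul, Matrix.smul_mul,
          nonsing_inv_mul _ hM, Matrix.one_mul, Matrix.mul_assoc, mul_nonsing_inv _ hM,
          Matrix.mul_one, nonsing_inv_mul_cancel_left _ _ hM]
    _ = M⁻¹ * (M.det • extM Iᶜ (restr Iᶜ M⁻¹).adjugate) * M⁻¹ := by
        rw [det_restr_smul_sub_mul_extM_adjugate_mul I hM]
    _ = _ := by
        rw [hcard, adjugate_eq_det_smul_nonsing_inv hM, restr_smul,
          ← zpow_smul_extM_adjugate_smul Iᶜ hM.ne_zero (restr Iᶜ M⁻¹)]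
        simp only [Matrix.mul_smul, Matrix.smul_mul, smul_smul, mul_comm]
end

section
/- Let ε₁,…,ε_k ∈ ℝ^k be linearly independent, v₀ ∈ ℝ^k, and for m < k and I ⊆ [k] with |I| = m let S_I = conv({0, v₀} ∪ {v₀ + ε_i : i ∈ I}). Then ((m+1)! · vol_{m+1}(S_I))² = βᵀ·((det [E]_I)·E^{−1} − Ext_I(adj [E]_I))·β, where E = (⟨ε_r, ε_s⟩)_{r,s∈[k]} is the Gram matrix and β = (⟨v₀, ε_1⟩, …, ⟨v₀, ε_k⟩)ᵀ. -/
open Matrix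

section Aux

variable {ι : Type*} [Fintype ι] [DecidableEq ι]

/-- Bordered matrix `[[a, bᵀ],[b, A]]` over `Option ι`. -/
def border (a : ℝ) (b : ι → ℝ) (A : Matrix ι ι ℝ) : Matrix (Option ι) (Option ι) ℝ :=
  fun i j =>
    match i, j with
    | none, none => a
    | none, some j => b j
    | some i, none => b i
    | some i, some j => A i j

lemma det_border (a : ℝ) (b : ι → ℝ) (A : Matrix ι ι ℝ) (hA : IsUnit A.det) :
    (border a b A).det = a * A.det - b ⬝ᵥ (A.adjugate *ᵥ b) := by
  haveI := A.invertibleOfIsUnitDet hA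
  have hre : (Matrix.reindex (Equiv.optionEquivSumPUnit ι) (Equiv.optionEquivSumPUnit ι)
      (border a b A)) =
      Matrix.fromBlocks A (Matrix.replicateCol PUnit.{1} b) (Matrix.replicateRow PUnit.{1} b)
        (Matrix.of fun _ _ => a) := by
    ext i j
    cases i <;> cases j <;> rfl
  have hval : ((Matrix.of fun _ _ => a : Matrix PUnit.{1} PUnit.{1} ℝ)
      - Matrix.replicateRow PUnit.{1} b * ⅟A * Matrix.replicateCol PUnit.{1} b).det
      = a - b ⬝ᵥ (A⁻¹ *ᵥ b) := by
    rw [Matrix.det_unique, Matrix.invOf_eq_nonsing_inv]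
    simp only [Matrix.sub_apply, Matrix.of_apply, Matrix.mul_apply, Matrix.replicateRow_apply,
      Matrix.replicateCol_apply, Matrix.mulVec, dotProduct, Finset.sum_mul, Finset.mul_sum]
    rw [Finset.sum_comm]
    congr 1
    refine Finset.sum_congr rfl fun l _ => ?_
    refine Finset.sum_congr rfl fun t _ => ?_
    ring
  have h1 : (border a b A).det = A.det * (a - b ⬝ᵥ (A⁻¹ *ᵥ b)) := by
    rw [← Matrix.det_reindex_self (Equiv.optionEquivSumPUnit ι) (border a b A), hre,
      Matrix.det_fromBlocks₁₁, hval]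
  have hadj : A.adjugate = A.det • A⁻¹ := by
    rw [Matrix.inv_def, Ring.inverse_eq_inv', smul_smul, mul_inv_cancel₀ hA.ne_zero, one_smul]
  rw [h1, hadj, Matrix.smul_mulVec, dotProduct_smul, smul_eq_mul]
  ring

lemma det_eq_det_border (a : ℝ) (b : ι → ℝ) (A : Matrix ι ι ℝ)
    (G : Matrix (Option ι) (Option ι) ℝ)
    (hnn : G none none = a)
    (hns : ∀ j, G none (some j) = a + b j)
    (hsn : ∀ i, G (some i) none = a + b i)
    (hss : ∀ i j, G (some i) (some j) = a + b i + b j + A i j) :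
    G.det = (border a b A).det := by
  classical
  set u : Option ι → ℝ := fun i => Option.elim i 0 (fun _ => -1) with hu
  set w : Option ι → ℝ := fun j => Option.elim j 1 (fun _ => 0) with hw
  set L : Matrix (Option ι) (Option ι) ℝ :=
    1 + Matrix.replicateCol PUnit.{1} u * Matrix.replicateRow PUnit.{1} w with hLdef
  have hLdet : L.det = 1 := by
    rw [hLdef, Matrix.det_one_add_replicateCol_mul_replicateRow]
    simp [dotProduct, Fintype.sum_option, hu, hw]
  have hL : ∀ i j, L i j = (if i = j then 1 else 0) + u i * w j := by
    intro i j
    simp [hLdef, Matrix.one_apply, Matrix.mul_apply]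
  have hLG : ∀ (X : Matrix (Option ι) (Option ι) ℝ) i j,
      (L * X) i j = X i j + u i * X none j := by
    intro X i j
    rw [Matrix.mul_apply]
    simp only [hL, add_mul, ite_mul, one_mul, zero_mul, Finset.sum_add_distrib,
      Finset.sum_ite_eq, Finset.mem_univ, if_true]
    congr 1
    rw [Fintype.sum_option]
    simp [hu, hw, mul_assoc]
  have hXL : ∀ (X : Matrix (Option ι) (Option ι) ℝ) i j,
      (X * Lᵀ) i j = X i j + u j * X i none := by
    intro X i j
    rw [Matrix.mul_apply]
    simp only [Matrix.transpose_apply, hL, mul_add, mul_ite, mul_one, mul_zero,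
      Finset.sum_add_distrib, Finset.sum_ite_eq, Finset.mem_univ, if_true]
    congr 1
    rw [Fintype.sum_option]
    simp [hu, hw]
    ring
  have key : L * G * Lᵀ = border a b A := by
    ext i j
    rw [hXL, hLG, hLG]
    cases i <;> cases j <;>
      simp [hu, border, hnn, hns, hsn, hss] <;> ring
  calc G.det = (L.det * G.det) * Lᵀ.det := by
        rw [Matrix.det_transpose, hLdet]; ring
    _ = (L * G * Lᵀ).det := by rw [Matrix.det_mul, Matrix.det_mul]
    _ = _ := by rw [key]

end Aux

lemma dot_extM {r : ℕ} (K : Finset (Fin r)) (B : Matrix K K ℝ) (x : Fin r → ℝ) :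
    x ⬝ᵥ (extM K B *ᵥ x) = (fun i : K => x i) ⬝ᵥ (B *ᵥ fun i : K => x i) := by
  classical
  have inner : ∀ i : K, (extM K B *ᵥ x) (i : Fin r) = (B *ᵥ fun j : K => x j) i := by
    intro i
    simp only [Matrix.mulVec, dotProduct]
    rw [← Finset.sum_subset (Finset.subset_univ K)
      (fun j _ hj => by simp [extM, hj])]
    rw [← Finset.sum_attach K (fun j => extM K B (i : Fin r) j * x j)]
    rw [Finset.univ_eq_attach]
    refine Finset.sum_congr rfl fun j _ => ?_
    simp [extM, i.2, j.2]
  have outer : x ⬝ᵥ (extM K B *ᵥ x)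
      = ∑ i : K, x (i : Fin r) * (extM K B *ᵥ x) (i : Fin r) := by
    simp only [dotProduct]
    rw [← Finset.sum_subset (Finset.subset_univ K) (fun i _ hi => by
      have : (extM K B *ᵥ x) i = 0 := by
        simp [Matrix.mulVec, dotProduct, extM, hi]
      simp [this])]
    rw [← Finset.sum_attach K (fun i => x i * (extM K B *ᵥ x) i), Finset.univ_eq_attach]
  rw [outer]
  simp only [dotProduct]
  exact Finset.sum_congr rfl fun i _ => by rw [inner]

/-- Squared-volume formula for the simplex
`S_I = conv({0, v₀} ∪ {v₀ + ε_i : i ∈ I})`:  by Gram's determinant formula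
`((m+1)! vol_{m+1}(S_I))²` is the determinant of the Gram matrix `G` of the edge
vectors `v₀` and `v₀ + ε_i` (`i ∈ I`) from the vertex `0`, and this equals
`βᵀ ((det [E]_I) E⁻¹ − Ext_I(adj [E]_I)) β`, where `E` is the Gram matrix of the
`ε`'s and `β = (⟨v₀, ε_j⟩)_j`. -/
theorem volume_S_I (k : ℕ) (ε : Fin k → (Fin k → ℝ)) (hε : LinearIndependent ℝ ε)
    (v₀ : Fin k → ℝ) (I : Finset (Fin k)) (hm : I.card < k)
    (E : Matrix (Fin k) (Fin k) ℝ) (hE : ∀ r s, E r s = ε r ⬝ᵥ ε s)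
    (β : Fin k → ℝ) (hβ : ∀ j, β j = v₀ ⬝ᵥ ε j)
    (u : Option I → (Fin k → ℝ))
    (hu0 : u none = v₀) (hui : ∀ i : I, u (some i) = v₀ + ε i)
    (G : Matrix (Option I) (Option I) ℝ) (hG : ∀ i j, G i j = u i ⬝ᵥ u j) :
    G.det = β ⬝ᵥ (((restr I E).det • E⁻¹ - extM I (restr I E).adjugate) *ᵥ β) := by
  classical
  set M : Matrix (Fin k) (Fin k) ℝ := Matrix.of ε with hMdef
  have hMunit : IsUnit M := Matrix.linearIndependent_rows_iff_isUnit.mp hε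
  have hMdet : IsUnit M.det := (Matrix.isUnit_iff_isUnit_det M).mp hMunit
  have hMTdet : IsUnit Mᵀ.det := Matrix.isUnit_det_transpose M hMdet
  have hEM : E = M * Mᵀ := by
    ext r s
    rw [hE]
    simp [Matrix.mul_apply, dotProduct, hMdef]
  have hβM : β = M *ᵥ v₀ := by
    funext j
    rw [hβ]
    simp [Matrix.mulVec, dotProduct, hMdef, mul_comm]
  set a : ℝ := v₀ ⬝ᵥ v₀ with ha
  set A : Matrix I I ℝ := restr I E with hA
  set b : I → ℝ := fun i => β (i : Fin k) with hb
  -- A is invertible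
  have hAdet : IsUnit A.det := by
    rw [← Matrix.isUnit_iff_isUnit_det, ← Matrix.mulVec_injective_iff_isUnit]
    have hker : ∀ x : I → ℝ, A *ᵥ x = 0 → x = 0 := by
      intro x hx
      set wv : Fin k → ℝ := ∑ i : I, x i • ε (i : Fin k) with hwv
      have hquad : x ⬝ᵥ (A *ᵥ x) = wv ⬝ᵥ wv := by
        rw [hwv]
        calc x ⬝ᵥ (A *ᵥ x)
            = ∑ i : I, ∑ j : I, ∑ t, x i * x j * (ε (i : Fin k) t * ε (j : Fin k) t) := by
              simp only [Matrix.mulVec, dotProduct, hA, restr, Matrix.submatrix_apply, hE]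
              refine Finset.sum_congr rfl fun i _ => ?_
              rw [Finset.mul_sum]
              refine Finset.sum_congr rfl fun j _ => ?_
              rw [Finset.sum_mul, Finset.mul_sum]
              exact Finset.sum_congr rfl fun t _ => by ring
          _ = ∑ i : I, ∑ t, ∑ j : I, x i * x j * (ε (i : Fin k) t * ε (j : Fin k) t) :=
              Finset.sum_congr rfl fun i _ => Finset.sum_comm
          _ = ∑ t, ∑ i : I, ∑ j : I, x i * x j * (ε (i : Fin k) t * ε (j : Fin k) t) :=
              Finset.sum_comm
          _ = (∑ i : I, x i • ε (i : Fin k)) ⬝ᵥ (∑ i : I, x i • ε (i : Fin k)) := by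
              simp only [dotProduct, Finset.sum_apply, Pi.smul_apply, smul_eq_mul]
              refine Finset.sum_congr rfl fun t _ => ?_
              rw [Finset.sum_mul_sum]
              refine Finset.sum_congr rfl fun i _ => Finset.sum_congr rfl fun j _ => by ring
      have hw0 : wv ⬝ᵥ wv = 0 := by rw [← hquad, hx, dotProduct_zero]
      have hwz : wv = 0 := by
        funext t
        have hnn : ∀ s : Fin k, 0 ≤ wv s * wv s := fun s => mul_self_nonneg _
        have := (Finset.sum_eq_zero_iff_of_nonneg (fun s _ => hnn s)).mp hw0 t
          (Finset.mem_univ t)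
        have := mul_self_eq_zero.mp this
        simpa using this
      have hli : LinearIndependent ℝ (fun i : I => ε (i : Fin k)) :=
        hε.comp _ Subtype.val_injective
      exact funext (Fintype.linearIndependent_iff.mp hli x (by rw [← hwv]; exact hwz))
    intro x y hxy
    have : A *ᵥ (x - y) = 0 := by
      rw [Matrix.mulVec_sub, hxy, sub_self]
    have := hker _ this
    exact sub_eq_zero.mp this
  -- LHS
  have hGdet : G.det = a * A.det - b ⬝ᵥ (A.adjugate *ᵥ b) := by
    rw [det_eq_det_border a b A G, det_border a b A hAdet]
    · rw [hG, hu0]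
    · intro j
      rw [hG, hu0, hui, dotProduct_add]
      simp only [hb, ha, hβ]
    · intro i
      rw [hG, hu0, hui, add_dotProduct, dotProduct_comm (ε _) v₀]
      simp only [hb, ha, hβ]
    · intro i j
      rw [hG, hui, hui, add_dotProduct, dotProduct_add, dotProduct_add,
        dotProduct_comm (ε _) v₀]
      have hAij : A i j = ε (i : Fin k) ⬝ᵥ ε (j : Fin k) := by
        rw [hA]; exact hE _ _
      rw [hAij]
      simp only [hb, ha, hβ]
      ring
  -- βᵀ E⁻¹ β = a
  have hquadE : β ⬝ᵥ (E⁻¹ *ᵥ β) = a := by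
    rw [hEM, Matrix.mul_inv_rev, hβM]
    have h1 : (Mᵀ⁻¹ * M⁻¹) * M = Mᵀ⁻¹ := by
      rw [Matrix.mul_assoc, Matrix.nonsing_inv_mul M hMdet, Matrix.mul_one]
    calc M *ᵥ v₀ ⬝ᵥ ((Mᵀ⁻¹ * M⁻¹) *ᵥ (M *ᵥ v₀))
        = M *ᵥ v₀ ⬝ᵥ (((Mᵀ⁻¹ * M⁻¹) * M) *ᵥ v₀) := by rw [Matrix.mulVec_mulVec]
      _ = (v₀ ᵥ* Mᵀ) ⬝ᵥ (Mᵀ⁻¹ *ᵥ v₀) := by rw [h1, Matrix.vecMul_transpose]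
      _ = v₀ ⬝ᵥ (Mᵀ *ᵥ (Mᵀ⁻¹ *ᵥ v₀)) := by rw [← Matrix.dotProduct_mulVec]
      _ = v₀ ⬝ᵥ ((Mᵀ * Mᵀ⁻¹) *ᵥ v₀) := by rw [Matrix.mulVec_mulVec]
      _ = a := by rw [Matrix.mul_nonsing_inv Mᵀ hMTdet, Matrix.one_mulVec]
  -- RHS
  rw [Matrix.sub_mulVec, dotProduct_sub, Matrix.smul_mulVec, dotProduct_smul,
    smul_eq_mul, hquadE, dot_extM, hGdet, hb]
  ring
end

section
/- Let q₁,…,q_k ∈ ℝ^k and v₀ ∈ ℝ^k with ⟨v₀, q_j⟩ ≠ 0 for all j, set q̃_j = q_j/⟨v₀, q_j⟩, and for J ⊆ [k] with |J| = ℓ ≥ 1 let Δ_J = conv{q̃_j : j ∈ J}. Then ((ℓ−1)! · vol_{ℓ−1}(Δ_J))² = (∏_{j∈J}⟨v₀,q_j⟩)^{−2} · v_qᵀ · Ext_J(adj [Q]_J) · v_q, where Q = (⟨q_r, q_s⟩)_{r,s∈[k]} and v_q = (⟨v₀,q_1⟩,…,⟨v₀,q_k⟩)ᵀ. -/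
open Matrix

/-!
Write `q_j = ⟨v₀, q_j⟩ • q̃_j`. Then `[Q]_J = D M D` with `D = diag(⟨v₀, q_j⟩)` and `M` the Gram
matrix of the `q̃_j`, and since `adj D · (⟨v₀, q_j⟩)_j = (det D) 𝟙`, the right-hand side is
`𝟙ᵀ adj(M) 𝟙`. On the other side, let `P` be the involution with rows `e_{j₁}` and `e_{j₁} − e_j`:
the Gram matrix of the edges `q̃_{j₁} − q̃_j` is the `(j₁, j₁)` minor of `P M Pᵀ`, so its
determinant is `adj(P M Pᵀ)_{j₁ j₁} = (det P)² 𝟙ᵀ adj(M) 𝟙`, because `P 𝟙 = e_{j₁}`.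
-/

theorem Fintype.sum_dite_mem {α M : Type*} [Fintype α] [DecidableEq α] [AddCommMonoid M]
    (K : Finset α) (f : ∀ x, x ∈ K → M) :
    ∑ x, (if h : x ∈ K then f x h else 0) = ∑ x : K, f x x.2 :=
  calc ∑ x, (if h : x ∈ K then f x h else 0)
      = ∑ x ∈ K, (if h : x ∈ K then f x h else 0) :=
        (Finset.sum_subset K.subset_univ fun _ _ hx => dif_neg hx).symm
    _ = ∑ x : K, f x x.2 := by
        rw [← Finset.sum_coe_sort]
        exact Finset.sum_congr rfl fun x _ => dif_pos x.2

def Finset.subtypeNeEquivErase {α : Type*} [DecidableEq α] (s : Finset α) {a : α} (ha : a ∈ s) :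
    {i : s // i ≠ ⟨a, ha⟩} ≃ s.erase a where
  toFun i := ⟨i.1, Finset.mem_erase.2 ⟨fun h => i.2 (Subtype.ext h), i.1.2⟩⟩
  invFun i := ⟨⟨i, Finset.mem_of_mem_erase i.2⟩,
    fun h => Finset.ne_of_mem_erase i.2 (congrArg Subtype.val h)⟩
  left_inv _ := rfl
  right_inv _ := rfl

namespace Matrix

variable {ι R : Type*} [Fintype ι] [DecidableEq ι] [CommRing R]

theorem adjugate_apply_self (A : Matrix ι ι R) (i : ι) :
    A.adjugate i i = (A.submatrix (Subtype.val : {j // j ≠ i} → ι) Subtype.val).det := by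
  rw [adjugate_apply, twoBlockTriangular_det' _ (· = i)]
  · convert one_mul _ using 2
    · convert det_eq_elem_of_subsingleton _ (⟨i, rfl⟩ : {j // j = i})
      simp [toSquareBlockProp_def]
    · ext j k
      simp [toSquareBlockProp_def, updateRow_ne j.2]
  · rintro _ rfl j hj
    rw [updateRow_self, Pi.single_eq_of_ne hj]

theorem dotProduct_adjugate_mul_mul_transpose_mulVec (P M : Matrix ι ι R) (u v : ι → R) :
    u ⬝ᵥ ((P * M * Pᵀ).adjugate *ᵥ v) =
      (P.adjugate *ᵥ u) ⬝ᵥ (M.adjugate *ᵥ (P.adjugate *ᵥ v)) := by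
  rw [adjugate_mul_distrib, adjugate_mul_distrib, ← adjugate_transpose, ← mulVec_mulVec,
    dotProduct_mulVec, vecMul_transpose, mulVec_mulVec]

theorem adjugate_diagonal_mulVec_self (c : ι → R) :
    (diagonal c).adjugate *ᵥ c = (∏ i, c i) • 1 := by
  ext i
  simp [adjugate_diagonal, mulVec_diagonal, Finset.prod_erase_mul]

def edgeMatrix (j₀ : ι) : Matrix ι ι R :=
  of fun i => if i = j₀ then Pi.single j₀ 1 else Pi.single j₀ 1 - Pi.single i 1

/-- For the Gram matrix `M` of vectors `x i`, this is the Gram matrix of the edges `x j₀ - x i`. -/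
def pivotReduce (M : Matrix ι ι R) (j₀ : ι) : Matrix {i // i ≠ j₀} {i // i ≠ j₀} R :=
  of fun i j => M j₀ j₀ - M i j₀ - M j₀ j + M i j

theorem edgeMatrix_mulVec_apply (j₀ i : ι) (v : ι → R) :
    (edgeMatrix j₀ *ᵥ v) i = if i = j₀ then v j₀ else v j₀ - v i := by
  simp only [mulVec, edgeMatrix, of_apply]
  split_ifs <;> simp only [sub_dotProduct, single_dotProduct, one_mul]

theorem edgeMatrix_mul_self (j₀ : ι) : edgeMatrix j₀ * edgeMatrix j₀ = (1 : Matrix ι ι R) := by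
  refine ext_iff_mulVec.2 fun v => funext fun i => ?_
  by_cases hi : i = j₀ <;> simp [← mulVec_mulVec, edgeMatrix_mulVec_apply, hi]

theorem edgeMatrix_mulVec_one (j₀ : ι) : edgeMatrix j₀ *ᵥ (1 : ι → R) = Pi.single j₀ 1 := by
  ext i
  by_cases hi : i = j₀ <;> simp [edgeMatrix_mulVec_apply, hi]

theorem submatrix_edgeMatrix_mul_mul_transpose (M : Matrix ι ι R) (j₀ : ι) :
    (edgeMatrix j₀ * M * (edgeMatrix j₀)ᵀ).submatrix Subtype.val Subtype.val =
      pivotReduce M j₀ := by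
  ext ⟨i, hi⟩ ⟨j, hj⟩
  have hrow : ∀ a, (M * (edgeMatrix j₀)ᵀ : Matrix ι ι R) a = edgeMatrix j₀ *ᵥ M a := fun a => by
    rw [mul_apply_eq_vecMul, vecMul_transpose]
  rw [submatrix_apply, Matrix.mul_assoc]
  change (edgeMatrix j₀ *ᵥ fun a => (M * (edgeMatrix j₀)ᵀ : Matrix ι ι R) a j) i = _
  simp only [hrow, edgeMatrix_mulVec_apply, hi, hj, if_false, pivotReduce, of_apply]
  ring

theorem det_pivotReduce (M : Matrix ι ι R) (j₀ : ι) :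
    (pivotReduce M j₀).det = 1 ⬝ᵥ (M.adjugate *ᵥ 1) := by
  set P : Matrix ι ι R := edgeMatrix j₀
  have hP : P.adjugate *ᵥ Pi.single j₀ 1 = P.det • 1 := by
    rw [← edgeMatrix_mulVec_one, mulVec_mulVec, adjugate_mul, smul_mulVec, one_mulVec]
  have hdet : P.det * P.det = 1 := by rw [← det_mul, edgeMatrix_mul_self, det_one]
  calc (pivotReduce M j₀).det
      = Pi.single j₀ 1 ⬝ᵥ ((P * M * Pᵀ).adjugate *ᵥ Pi.single j₀ 1) := by
        rw [mulVec_single_one, single_one_dotProduct, col_apply, adjugate_apply_self,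
          submatrix_edgeMatrix_mul_mul_transpose]
    _ = (P.det * P.det) * (1 ⬝ᵥ (M.adjugate *ᵥ 1)) := by
        rw [dotProduct_adjugate_mul_mul_transpose_mulVec, hP, mulVec_smul, smul_dotProduct,
          dotProduct_smul, smul_eq_mul, smul_eq_mul, mul_assoc]
    _ = 1 ⬝ᵥ (M.adjugate *ᵥ 1) := by rw [hdet, one_mul]

end Matrix

theorem dotProduct_extM_mulVec {r : ℕ} (K : Finset (Fin r)) (B : Matrix K K ℝ) (v : Fin r → ℝ) :
    v ⬝ᵥ (extM K B *ᵥ v) = (fun i : K => v i) ⬝ᵥ (B *ᵥ fun i : K => v i) := by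
  simp only [dotProduct, mulVec, extM, dite_mul, zero_mul, Finset.sum_dite_irrel,
    Finset.sum_const_zero, mul_dite, mul_zero, Fintype.sum_dite_mem]

/-- Squared-volume formula for the simplex `Δ_J = conv{q̃_j : j ∈ J}`, where
`q̃_j = q_j / ⟨v₀, q_j⟩`: by Gram's determinant formula, `((ℓ-1)! vol_{ℓ-1}(Δ_J))²`
is the determinant of the Gram matrix `G` of the edge vectors `q̃_{j₁} − q̃_j`
(`j ∈ J \ {j₁}`), and this equals
`(∏_{j∈J} ⟨v₀,q_j⟩)⁻² · v_qᵀ Ext_J(adj [Q]_J) v_q`. -/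
theorem volume_Delta_J (k : ℕ) (q : Fin k → (Fin k → ℝ)) (v₀ : Fin k → ℝ)
    (h : ∀ j, v₀ ⬝ᵥ q j ≠ 0) (J : Finset (Fin k)) (j₁ : Fin k) (hj₁ : j₁ ∈ J)
    (qt : Fin k → (Fin k → ℝ)) (hqt : ∀ j, qt j = (v₀ ⬝ᵥ q j)⁻¹ • q j)
    (Q : Matrix (Fin k) (Fin k) ℝ) (hQ : ∀ r s, Q r s = q r ⬝ᵥ q s)
    (vq : Fin k → ℝ) (hvq : ∀ j, vq j = v₀ ⬝ᵥ q j)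
    (G : Matrix (J.erase j₁) (J.erase j₁) ℝ)
    (hG : ∀ i j, G i j = (qt j₁ - qt i.1) ⬝ᵥ (qt j₁ - qt j.1)) :
    G.det = ((∏ j ∈ J, v₀ ⬝ᵥ q j) ^ 2)⁻¹ *
      (vq ⬝ᵥ (extM J (restr J Q).adjugate *ᵥ vq)) := by
  set c : J → ℝ := fun i => v₀ ⬝ᵥ q i
  set M : Matrix J J ℝ := of fun r s => qt r ⬝ᵥ qt s
  have hscale : restr J Q = diagonal c * M * (diagonal c)ᵀ := by
    ext r s
    simp only [restr, submatrix_apply, hQ, hqt, dotProduct_smul, smul_dotProduct, smul_eq_mul,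
      diagonal_transpose, mul_diagonal, diagonal_mul, of_apply, c, M]
    field_simp [h r.1, h s.1]
  have hRHS : vq ⬝ᵥ (extM J (restr J Q).adjugate *ᵥ vq) =
      (∏ j ∈ J, v₀ ⬝ᵥ q j) ^ 2 * (1 ⬝ᵥ (M.adjugate *ᵥ 1)) := by
    rw [dotProduct_extM_mulVec, show (fun i : J => vq i) = c from funext fun i => hvq i, hscale,
      dotProduct_adjugate_mul_mul_transpose_mulVec, adjugate_diagonal_mulVec_self,
      Finset.prod_coe_sort J fun j => v₀ ⬝ᵥ q j, mulVec_smul, smul_dotProduct, dotProduct_smul,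
      smul_eq_mul, smul_eq_mul]
    ring
  have hLHS : G.det = 1 ⬝ᵥ (M.adjugate *ᵥ 1) := by
    rw [← det_pivotReduce M ⟨j₁, hj₁⟩, ← det_submatrix_equiv_self (J.subtypeNeEquivErase hj₁) G]
    congr 1
    ext i j
    simp only [Finset.subtypeNeEquivErase, Equiv.coe_fn_mk, submatrix_apply, hG, dotProduct_sub,
      sub_dotProduct, pivotReduce, of_apply, M]
    ring
  rw [hLHS, hRHS, inv_mul_cancel_left₀ (pow_ne_zero 2 (Finset.prod_ne_zero_iff.2 fun j _ => h j))]
end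

section
/- Let C = v₀ + pos(ε₁,…,ε_k) ⊂ ℝ^k be a simplicial cone with 0 in its interior, let q_j = (−1)^{j−1} ε₁ × ⋯ × ε̂_j × ⋯ × ε_k (generalized cross product omitting ε_j) and q̃_j = q_j/⟨v₀,q_j⟩. For 0 ≤ m < k, I ⊆ [k] with |I| = m, J = [k]\I, ℓ = |J|, set S_I = conv({0, v₀} ∪ {v₀+ε_i : i∈I}) and Δ_J = conv{q̃_j : j∈J}. Then vol_{ℓ−1}(Δ_J)/vol_{m+1}(S_I) = ((m+1)!/(ℓ−1)!) · vol_k(𝓔)^{ℓ−1} / ∏_{j∈J}|⟨v₀, q_j⟩|, where 𝓔 is the parallelepiped spanned by ε₁,…,ε_k, so vol_k(𝓔) = |det(ε₁,…,ε_k)|. -/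
/-!
Write `v₀ = ∑ cᵢ εᵢ` (all `cᵢ < 0`) and let `E` be the matrix with rows `εᵢ`. The edges
`v₀, v₀ + εᵢ` of `S_I` are the rows of `X E`, where `X` has rows `c, c + eᵢ`. Since `q_j` is `W`
times the `j`-th vector of the dual basis, the edges `q̃_{j₁} - q̃_j` of `Δ_J` are the rows of
`Y B`, where `B` has the dual basis as rows and `Y` has rows `e_{j₁}/c_{j₁} - e_j/c_j`; moreover
`X Yᵀ = 0`. Completing `X` by the rows `e_j` (`j ∈ J \ {j₁}`) to a square matrix `M` with
`det M = c_{j₁}`, both `[X E; Y B] [X E; Y B]ᵀ` and `(M E) [X E; Y B]ᵀ` are block triangular.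
Comparing their determinants gives `det G_Δ · (W ∏_{j ∈ J} c_j)² = det G_S`, and
`⟨v₀, q_j⟩ = W c_j` turns this into the stated ratio.
-/

open Matrix

/-- The generalized cross product `q_j = (−1)^{j−1} ε₁ × ⋯ × ε̂_j × ⋯ × ε_k`
(with the paper's sign convention), characterized by
`⟨qvec ε j, x⟩ = det(ε₁, …, ε_{j−1}, x, ε_{j+1}, …, ε_k)`; in particular
`⟨qvec ε i, ε j⟩ = W δ_{ij}` with `W = det(ε₁, …, ε_k)`.  Its `i`-th component is
the determinant of the matrix with columns `ε₁, …, ε_k` in which column `j` is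
replaced by the standard basis vector `e_i`. -/
def qvec {k : ℕ} (ε : Fin k → (Fin k → ℝ)) (j : Fin k) : Fin k → ℝ :=
  fun i => ((Matrix.of fun a b => ε b a).updateCol j (Pi.single i 1)).det

namespace Matrix

section Gram

variable {R ι κ n : Type*} [CommRing R] [Fintype n]

theorem eq_mul_transpose_self_of_rows {G : Matrix ι ι R} {U : Matrix ι n R} {u : ι → n → R}
    (hG : ∀ i j, G i j = u i ⬝ᵥ u j) (hU : ∀ i, U i = u i) : G = U * Uᵀ := by
  ext i j
  rw [hG, ← hU, ← hU]
  rfl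

variable [Fintype ι] [Fintype κ] [DecidableEq ι] [DecidableEq κ]

theorem det_mul_transpose_of_equiv (X Y : Matrix ι n R) (e : ι ≃ n) :
    (X * Yᵀ).det = (X.submatrix id e).det * (Y.submatrix id e).det := by
  rw [← det_transpose (Y.submatrix id e), ← det_mul, transpose_submatrix, submatrix_mul_equiv,
    submatrix_id_id]

theorem det_mul_submatrix_id_equiv [DecidableEq n] (M : Matrix ι n R) (A : Matrix n n R)
    (e : ι ≃ n) : ((M * A).submatrix id e).det = (M.submatrix id e).det * A.det := by
  rw [← submatrix_mul_equiv M A id e e, det_mul, det_submatrix_equiv_self]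

theorem det_fromRows_mul_det_fromRows {X K : Matrix ι n R} {N Z : Matrix κ n R}
    (h : X * Zᵀ = 0) (e : ι ⊕ κ ≃ n) :
    ((fromRows X N).submatrix id e).det * ((fromRows K Z).submatrix id e).det
      = (X * Kᵀ).det * (N * Zᵀ).det := by
  rw [← det_mul_transpose_of_equiv, transpose_fromRows, fromRows_mul_fromCols, h,
    det_fromBlocks_zero₁₂]

theorem det_gram_mul_det_gram_dual [DecidableEq n] {E B : Matrix n n R} (hEB : E * Bᵀ = 1)
    {X : Matrix ι n R} {Y N : Matrix κ n R} (hXY : X * Yᵀ = 0) (e : ι ⊕ κ ≃ n) :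
    ((X * E) * (X * E)ᵀ).det * ((Y * B) * (Y * B)ᵀ).det
        * (((fromRows X N).submatrix id e).det * E.det) ^ 2
      = ((X * E) * (X * E)ᵀ).det ^ 2 * (N * Yᵀ).det ^ 2 := by
  have hX : (X * E) * (Y * B)ᵀ = 0 := by
    rw [transpose_mul, Matrix.mul_assoc, ← Matrix.mul_assoc E, hEB, Matrix.one_mul, hXY]
  have hN : (N * E) * (Y * B)ᵀ = N * Yᵀ := by
    rw [transpose_mul, Matrix.mul_assoc, ← Matrix.mul_assoc E, hEB, Matrix.one_mul]
  have hgram := det_fromRows_mul_det_fromRows (X := X * E) (N := Y * B) (K := X * E) hX e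
  have hpair := det_fromRows_mul_det_fromRows (X := X * E) (N := N * E) (K := X * E) hX e
  rw [hN, ← fromRows_mul, det_mul_submatrix_id_equiv] at hpair
  calc _ = (((fromRows X N).submatrix id e).det * E.det
          * ((fromRows (X * E) (Y * B)).submatrix id e).det) ^ 2 := by rw [← hgram]; ring
    _ = _ := by rw [hpair]; ring

end Gram

section Adjugate

variable {R n : Type*} [CommRing R] [Fintype n] [DecidableEq n]

theorem det_one_updateRow (i : n) (v : n → R) :
    ((1 : Matrix n n R).updateRow i v).det = v i := by
  rw [← cramer_transpose_apply, transpose_one, cramer_one]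
  rfl

theorem det_one_updateCol (i : n) (v : n → R) :
    ((1 : Matrix n n R).updateCol i v).det = v i := by
  rw [← cramer_apply, cramer_one]
  rfl

theorem vecMul_dotProduct_adjugate_col (A : Matrix n n R) (c : n → R) (j : n) :
    c ᵥ* A ⬝ᵥ A.adjugate.col j = A.det * c j := by
  rw [← dotProduct_mulVec, ← mulVec_single_one, mulVec_mulVec, mul_adjugate, smul_mulVec,
    one_mulVec, dotProduct_smul, dotProduct_single, smul_eq_mul, mul_one]

end Adjugate

theorem vecMul_injective_of_det_fromRows_ne_zero {K ι κ n : Type*} [Field K] [Fintype ι]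
    [Fintype κ] [Fintype n] [DecidableEq ι] [DecidableEq κ] {X : Matrix ι n K}
    {N : Matrix κ n K} (e : ι ⊕ κ ≃ n) (h : ((fromRows X N).submatrix id e).det ≠ 0) :
    Function.Injective X.vecMul := by
  have hM : Function.Injective (fromRows X N).vecMul := fun v w hvw =>
    vecMul_injective_of_isUnit ((isUnit_iff_isUnit_det _).mpr h.isUnit) (congrArg (· ∘ e) hvw)
  intro v w hvw
  exact congrArg (· ∘ Sum.inl) (@hM (Sum.elim v 0) (Sum.elim w 0) (by simp [hvw]))

end Matrix

section ConeSimplices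

variable {K n : Type*} [Field K] [DecidableEq n]

/-- Coordinates in the basis `ε` of the edges `v₀`, `v₀ + εᵢ` of `S_I`, when `v₀ = ∑ cᵢ εᵢ`. -/
def simplexEdges (c : n → K) (I : Finset n) : Matrix (Option I) n K :=
  of fun p => p.elim c fun i => c + Pi.single (i : n) 1

/-- Coordinates in the basis dual to `ε` of the edges `q̃_{j₁} - q̃_j` of `Δ_J`. -/
def dualSimplexEdges (c : n → K) (J : Finset n) (j₁ : n) : Matrix J n K :=
  of fun j => Pi.single j₁ (c j₁)⁻¹ - Pi.single (j : n) (c j)⁻¹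

variable {c : n → K} {I J : Finset n} {j₁ : n}

@[simp]
theorem simplexEdges_none : simplexEdges c I none = c := rfl

@[simp]
theorem simplexEdges_some (i : I) : simplexEdges c I (some i) = c + Pi.single (i : n) 1 := rfl

@[simp]
theorem dualSimplexEdges_apply (j : J) :
    dualSimplexEdges c J j₁ j = Pi.single j₁ (c j₁)⁻¹ - Pi.single (j : n) (c j)⁻¹ := rfl

variable [Fintype n]

variable (I j₁) in
def rowLabel : Option I ⊕ (Iᶜ.erase j₁ : Finset n) → n :=
  Sum.elim (fun p => p.elim j₁ (↑)) (↑)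

theorem simplexEdges_mul_transpose_dualSimplexEdges (hc₁ : c j₁ ≠ 0) (hc : ∀ j ∈ J, c j ≠ 0)
    (hj₁ : j₁ ∉ I) (hIJ : Disjoint I J) :
    simplexEdges c I * (dualSimplexEdges c J j₁)ᵀ = 0 := by
  ext (_ | ⟨i, hi⟩) ⟨j, hj⟩ <;>
    simp only [mul_apply', transpose_apply, simplexEdges_none, simplexEdges_some,
      dualSimplexEdges_apply, dotProduct_sub, dotProduct_single, Matrix.zero_apply]
  · simp [hc₁, hc j hj]
  · have hi₁ : j₁ ≠ i := (ne_of_mem_of_not_mem hi hj₁).symm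
    have hij : j ≠ i := (ne_of_mem_of_not_mem hi (Finset.disjoint_right.mp hIJ hj)).symm
    simp [hi₁, hij, hc₁, hc j hj]

theorem one_submatrix_mul_transpose_dualSimplexEdges (hj₁ : j₁ ∉ J) :
    (1 : Matrix n n K).submatrix (Subtype.val : J → n) id * (dualSimplexEdges c J j₁)ᵀ
      = diagonal fun j : J => -(c j)⁻¹ := by
  ext ⟨i, hi⟩ ⟨j, hj⟩
  have hi₁ : i ≠ j₁ := ne_of_mem_of_not_mem hi hj₁
  simp [diagonal_apply, mul_apply, Pi.single_apply, one_apply, hi₁]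
  split_ifs <;> simp_all

theorem rowLabel_injective (hj₁ : j₁ ∉ I) : Function.Injective (rowLabel I j₁) := by
  rintro ((_ | ⟨i, hi⟩) | ⟨j, hj⟩) ((_ | ⟨i', hi'⟩) | ⟨j', hj'⟩) h <;>
    simp only [rowLabel, Sum.elim_inl, Sum.elim_inr, Option.elim_none, Option.elim_some] at h <;>
    grind [Finset.mem_compl]

theorem rowLabel_bijective (hj₁ : j₁ ∉ I) : Function.Bijective (rowLabel I j₁) := by
  refine (Fintype.bijective_iff_injective_and_card _).mpr ⟨rowLabel_injective hj₁, ?_⟩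
  have := Finset.card_add_card_compl I
  have := Finset.card_erase_add_one (Finset.mem_compl.mpr hj₁)
  simp only [Fintype.card_sum, Fintype.card_option, Fintype.card_coe]
  omega

theorem det_fromRows_simplexEdges_submatrix (hj₁ : j₁ ∉ I) :
    ((fromRows (simplexEdges c I) ((1 : Matrix n n K).submatrix (Subtype.val : Iᶜ.erase j₁ → n)
      id)).submatrix id (rowLabel I j₁)).det = c j₁ := by
  -- the rows `c + eᵢ` are the rows `eᵢ` plus the first row `c`
  have hfactor : (fromRows (simplexEdges c I) ((1 : Matrix n n K).submatrix
      (Subtype.val : Iᶜ.erase j₁ → n) id)).submatrix id (rowLabel I j₁)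
      = (1 : Matrix (Option I ⊕ Iᶜ.erase j₁) _ K).updateCol (.inl none) (Sum.elim 1 0)
        * (1 : Matrix (Option I ⊕ Iᶜ.erase j₁) _ K).updateRow (.inl none)
          (c ∘ rowLabel I j₁) := by
    ext p r
    rcases p with (_ | ⟨i, hi⟩) | ⟨j, hj⟩ <;> rcases r with (_ | ⟨i', hi'⟩) | ⟨j', hj'⟩ <;>
      simp [mul_apply, updateCol_apply, updateRow_apply, one_apply, rowLabel, Pi.single_apply] <;>
      grind [Finset.mem_compl]
  rw [hfactor, det_mul, det_one_updateCol, det_one_updateRow]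
  simp [rowLabel]

theorem det_gram_dualSimplexEdges {E B : Matrix n n K} (hEB : E * Bᵀ = 1)
    (hc : ∀ j ∈ Iᶜ, c j ≠ 0) (hj₁ : j₁ ∈ Iᶜ)
    (hS : ((simplexEdges c I * E) * (simplexEdges c I * E)ᵀ).det ≠ 0) :
    ((dualSimplexEdges c (Iᶜ.erase j₁) j₁ * B) * (dualSimplexEdges c (Iᶜ.erase j₁) j₁ * B)ᵀ).det
        * (E.det * ∏ j ∈ Iᶜ, c j) ^ 2
      = ((simplexEdges c I * E) * (simplexEdges c I * E)ᵀ).det := by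
  have hj₁I : j₁ ∉ I := Finset.mem_compl.mp hj₁
  have h := det_gram_mul_det_gram_dual hEB
    (simplexEdges_mul_transpose_dualSimplexEdges (hc j₁ hj₁)
      (fun j hj => hc j (Finset.mem_of_mem_erase hj)) hj₁I
      ((disjoint_compl_right (a := I)).mono_right (Finset.erase_subset _ _)))
    (N := (1 : Matrix n n K).submatrix (Subtype.val : Iᶜ.erase j₁ → n) id)
    (Equiv.ofBijective _ (rowLabel_bijective hj₁I))
  rw [Equiv.coe_ofBijective, det_fromRows_simplexEdges_submatrix hj₁I,
    one_submatrix_mul_transpose_dualSimplexEdges (Finset.notMem_erase _ _), det_diagonal] at h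
  have hinv : (∏ j : Iᶜ.erase j₁, -(c j)⁻¹) ^ 2 * (∏ j : Iᶜ.erase j₁, c j) ^ 2 = 1 := by
    have hneg : ∀ j : Iᶜ.erase j₁, -(c j)⁻¹ * c j = -1 := fun j => by
      rw [neg_mul, inv_mul_cancel₀ (hc j (Finset.mem_of_mem_erase j.2))]
    rw [← mul_pow, ← Finset.prod_mul_distrib, Finset.prod_congr rfl fun j _ => hneg j,
      Finset.prod_const, ← pow_mul, mul_comm, pow_mul, neg_one_sq, one_pow]
  rw [← Finset.mul_prod_erase _ _ hj₁, ← Finset.prod_coe_sort (Iᶜ.erase j₁)]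
  refine mul_left_cancel₀ hS ?_
  linear_combination (∏ j : Iᶜ.erase j₁, c j) ^ 2 * h
    + ((simplexEdges c I * E) * (simplexEdges c I * E)ᵀ).det ^ 2 * hinv

end ConeSimplices

theorem posDef_gram_simplexEdges {n : Type*} [Fintype n] [DecidableEq n] {c : n → ℝ}
    {I : Finset n} {j₁ : n} {E : Matrix n n ℝ} (hE : IsUnit E) (hc₁ : c j₁ ≠ 0)
    (hj₁ : j₁ ∉ I) : ((simplexEdges c I * E) * (simplexEdges c I * E)ᵀ).PosDef := by
  have hX := vecMul_injective_of_det_fromRows_ne_zero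
    (Equiv.ofBijective _ (rowLabel_bijective hj₁))
    (N := (1 : Matrix n n ℝ).submatrix (Subtype.val : Iᶜ.erase j₁ → n) id)
    (by rwa [Equiv.coe_ofBijective, det_fromRows_simplexEdges_submatrix hj₁])
  have hXE : Function.Injective (simplexEdges c I * E).vecMul := fun v w h =>
    hX (vecMul_injective_of_isUnit hE (by simpa only [vecMul_vecMul] using h))
  simpa only [conjTranspose_eq_transpose_of_trivial] using PosDef.mul_conjTranspose_self _ hXE

theorem qvec_eq_adjugate_col {k : ℕ} (ε : Fin k → Fin k → ℝ) (j : Fin k) :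
    qvec ε j = (of ε).adjugate.col j := by
  funext i
  rw [qvec, show (of fun a b => ε b a) = (of ε)ᵀ from rfl, updateCol_transpose, det_transpose,
    ← cramer_transpose_apply, cramer_eq_adjugate_mulVec, mulVec_single_one, ← adjugate_transpose]
  rfl

theorem Real.sqrt_eq_sqrt_div_abs_of_mul_sq_eq {x y a : ℝ} (h : x * a ^ 2 = y) (ha : a ≠ 0) :
    √x = √y / |a| := by
  rw [← h, Real.sqrt_mul' _ (sq_nonneg _), Real.sqrt_sq_eq_abs,
    mul_div_cancel_right₀ _ (abs_ne_zero.mpr ha)]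

theorem volume_ratio_general (k : ℕ) (ε : Fin k → (Fin k → ℝ)) (hε : LinearIndependent ℝ ε)
    (v₀ : Fin k → ℝ)
    -- `0` lies in the interior of the cone `C = v₀ + pos(ε₁,…,ε_k)`
    (hint : ∃ c : Fin k → ℝ, (∀ i, c i < 0) ∧ v₀ = ∑ i, c i • ε i)
    (I : Finset (Fin k))
    (W : ℝ) (hW : W = (Matrix.of fun a b => ε b a).det)
    (q : Fin k → (Fin k → ℝ)) (hq : ∀ j, q j = qvec ε j)
    (qt : Fin k → (Fin k → ℝ)) (hqt : ∀ j, qt j = (v₀ ⬝ᵥ q j)⁻¹ • q j)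
    -- the Gram matrix of the edge vectors of `S_I` from the vertex `0`
    (u : Option I → (Fin k → ℝ))
    (hu0 : u none = v₀) (hui : ∀ i : I, u (some i) = v₀ + ε i)
    (GS : Matrix (Option I) (Option I) ℝ) (hGS : ∀ i j, GS i j = u i ⬝ᵥ u j)
    -- the Gram matrix of the edge vectors of `Δ_J` from the vertex `q̃_{j₁}`
    (j₁ : Fin k) (hj₁ : j₁ ∈ Iᶜ)
    (GD : Matrix (Iᶜ.erase j₁) (Iᶜ.erase j₁) ℝ)
    (hGD : ∀ i j, GD i j = (qt j₁ - qt i.1) ⬝ᵥ (qt j₁ - qt j.1))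
    -- the volumes, via Gram's determinant formula
    (volS volD : ℝ)
    (hvolS : volS = Real.sqrt GS.det / (Nat.factorial (I.card + 1) : ℝ))
    (hvolD : volD = Real.sqrt GD.det / (Nat.factorial (Iᶜ.card - 1) : ℝ)) :
    volD / volS
      = ((Nat.factorial (I.card + 1) : ℝ) / (Nat.factorial (Iᶜ.card - 1) : ℝ))
          * |W| ^ (Iᶜ.card - 1) / ∏ j ∈ Iᶜ, |v₀ ⬝ᵥ q j| := by
  obtain ⟨c, hc, rfl⟩ := hint
  set E : Matrix (Fin k) (Fin k) ℝ := of ε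
  have hE : IsUnit E := linearIndependent_rows_iff_isUnit.mp hε
  have hWE : W = E.det := by rw [hW, ← det_transpose]; rfl
  have hW0 : W ≠ 0 := hWE ▸ ((isUnit_iff_isUnit_det E).mp hE).ne_zero
  have hv₀ : ∑ i, c i • ε i = c ᵥ* E := (vecMul_eq_sum c E).symm
  have hvq (j : Fin k) : (∑ i, c i • ε i) ⬝ᵥ q j = W * c j := by
    rw [hv₀, hq, qvec_eq_adjugate_col, vecMul_dotProduct_adjugate_col, hWE]
  -- the rows of `B` are the dual basis `q j / W`
  set B : Matrix (Fin k) (Fin k) ℝ := W⁻¹ • E.adjugateᵀ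
  have hEB : E * Bᵀ = 1 := by
    rw [transpose_smul, transpose_transpose, Matrix.mul_smul, mul_adjugate, smul_smul, ← hWE,
      inv_mul_cancel₀ hW0, one_smul]
  have hqt' (j : Fin k) : qt j = (c j)⁻¹ • B j := by
    rw [hqt, hvq, hq, qvec_eq_adjugate_col, mul_inv, mul_comm, ← smul_smul]
    rfl
  have hGS' := eq_mul_transpose_self_of_rows hGS (U := simplexEdges c I * E) <| by
    rintro (_ | i) <;> simp [mul_apply_eq_vecMul, hu0, hui, hv₀, add_vecMul, single_vecMul, E]
  have hGD' := eq_mul_transpose_self_of_rows hGD (U := dualSimplexEdges c (Iᶜ.erase j₁) j₁ * B)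
    fun j => by
      rw [mul_apply_eq_vecMul, dualSimplexEdges_apply, sub_vecMul, single_vecMul, single_vecMul,
        hqt', hqt']
      rfl
  have hS : 0 < GS.det :=
    hGS' ▸ (posDef_gram_simplexEdges hE (hc j₁).ne (Finset.mem_compl.mp hj₁)).det_pos
  have hkey := det_gram_dualSimplexEdges hEB (fun j _ => (hc j).ne) hj₁ (hGS' ▸ hS.ne')
  rw [← hGS', ← hGD', ← hWE] at hkey
  have hprod : ∏ j ∈ Iᶜ, |(∑ i, c i • ε i) ⬝ᵥ q j| = |W| ^ Iᶜ.card * |∏ j ∈ Iᶜ, c j| := by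
    simp_rw [hvq, abs_mul]
    rw [Finset.prod_mul_distrib, Finset.prod_const, Finset.abs_prod]
  rw [hvolD, hvolS, Real.sqrt_eq_sqrt_div_abs_of_mul_sq_eq hkey
      (mul_ne_zero hW0 (Finset.prod_ne_zero_iff.mpr fun j _ => (hc j).ne)),
    hprod, ← pow_sub_one_mul (Finset.card_ne_zero_of_mem hj₁) |W|, abs_mul]
  field_simp

/-- **Volume ratio theorem.**  For a simplicial cone `C = v₀ + pos(ε₁,…,ε_k)`
with `0` in its interior, facet normals `q_j` and `q̃_j = q_j/⟨v₀,q_j⟩`, and for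
`I ⊆ [k]` with `|I| = m < k`, `J = Iᶜ`, `ℓ = |J|`, the simplices
`S_I = conv({0, v₀} ∪ {v₀+ε_i : i∈I})` and `Δ_J = conv{q̃_j : j∈J}` (with volumes
defined via Gram's determinant formula) satisfy
`vol_{ℓ−1}(Δ_J)/vol_{m+1}(S_I) = ((m+1)!/(ℓ−1)!) · vol_k(𝓔)^{ℓ−1} / ∏_{j∈J}|⟨v₀,q_j⟩|`,
where `vol_k(𝓔) = |det(ε₁,…,ε_k)| = |W|`. -/
theorem volume_ratio (k : ℕ) (ε : Fin k → (Fin k → ℝ)) (hε : LinearIndependent ℝ ε)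
    (v₀ : Fin k → ℝ)
    -- `0` lies in the interior of the cone `C = v₀ + pos(ε₁,…,ε_k)`
    (hint : ∃ c : Fin k → ℝ, (∀ i, c i < 0) ∧ v₀ = ∑ i, c i • ε i)
    (I : Finset (Fin k)) (hm : I.card < k)
    (W : ℝ) (hW : W = (Matrix.of fun a b => ε b a).det)
    (q : Fin k → (Fin k → ℝ)) (hq : ∀ j, q j = qvec ε j)
    (qt : Fin k → (Fin k → ℝ)) (hqt : ∀ j, qt j = (v₀ ⬝ᵥ q j)⁻¹ • q j)
    -- the Gram matrix of the edge vectors of `S_I` from the vertex `0`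
    (u : Option I → (Fin k → ℝ))
    (hu0 : u none = v₀) (hui : ∀ i : I, u (some i) = v₀ + ε i)
    (GS : Matrix (Option I) (Option I) ℝ) (hGS : ∀ i j, GS i j = u i ⬝ᵥ u j)
    -- the Gram matrix of the edge vectors of `Δ_J` from the vertex `q̃_{j₁}`
    (j₁ : Fin k) (hj₁ : j₁ ∈ Iᶜ)
    (GD : Matrix (Iᶜ.erase j₁) (Iᶜ.erase j₁) ℝ)
    (hGD : ∀ i j, GD i j = (qt j₁ - qt i.1) ⬝ᵥ (qt j₁ - qt j.1))
    -- the volumes, via Gram's determinant formula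
    (volS volD : ℝ)
    (hvolS : volS = Real.sqrt GS.det / (Nat.factorial (I.card + 1) : ℝ))
    (hvolD : volD = Real.sqrt GD.det / (Nat.factorial (Iᶜ.card - 1) : ℝ)) :
    volD / volS
      = ((Nat.factorial (I.card + 1) : ℝ) / (Nat.factorial (Iᶜ.card - 1) : ℝ))
          * |W| ^ (Iᶜ.card - 1) / ∏ j ∈ Iᶜ, |v₀ ⬝ᵥ q j| :=
  volume_ratio_general k ε hε v₀ hint I W hW q hq qt hqt u hu0 hui GS hGS j₁ hj₁ GD hGD volS volD
    hvolS hvolD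
end

section
/- Let a ≥ b ≥ |c| with (a,b,c) ≠ (0,0,0) and a > 0, and set w₁ = (a,−b,−c)ᵀ, w₂ = (b,c,a)ᵀ, w₃ = (c,a,b)ᵀ, w₄ = (b,−c,−a)ᵀ, w₅ = (−c,a,−b)ᵀ. Then with D = a³ + 5a²b + 3ab² − 5ac² − b³ + bc² > 0 and x₁ = (a−b)(a+b+c)(a+b−c)/D, x₂ = a(a+b−c)(b+c)/D, x₃ = a(a+b+c)(b−c)/D, one has (a,b,c)ᵀ = μ·(x₁w₁ + x₂(w₂+w₃) + x₃(w₄+w₅)) for some μ > 0, x₁,x₂,x₃ ≥ 0, and x₁ + 2(x₂+x₃) = 1. -/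
/-!
Clearing the denominator `D`, everything reduces to two polynomial identities in `a, b, c`:
the weight numerators `N₁, N₂, N₃` satisfy `N₁ + 2 (N₂ + N₃) = D`, and
`N₁ w₁ + N₂ (w₂ + w₃) + N₃ (w₄ + w₅) = E (a, b, c)` with
`E = a³ + a²b + ab² + b³ + (a − b) c²`. Under `a ≥ b ≥ |c|` every factor of the
numerators is nonnegative and `D, E > 0`, so `μ = D / E` works.
-/

section Identities

variable {R : Type*} [CommRing R] (a b c : R)

theorem tetrahedral_numerators_sum :
    (a - b) * (a + b + c) * (a + b - c) +
        2 * (a * (a + b - c) * (b + c) + a * (a + b + c) * (b - c)) =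
      a^3 + 5*a^2*b + 3*a*b^2 - 5*a*c^2 - b^3 + b*c^2 := by
  ring

theorem tetrahedral_numerators_combination :
    ((a - b) * (a + b + c) * (a + b - c)) • ![a, -b, -c] +
        (a * (a + b - c) * (b + c)) • (![b, c, a] + ![c, a, b]) +
        (a * (a + b + c) * (b - c)) • (![b, -c, -a] + ![-c, a, -b]) =
      (a^3 + a^2*b + a*b^2 + b^3 + (a - b) * c^2) • ![a, b, c] := by
  ext i
  fin_cases i <;> simp <;> ring

end Identities

theorem tetrahedral_denom_pos {a b c : ℝ} (hab : b ≤ a) (hbc : |c| ≤ b) (ha : 0 < a) :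
    0 < a^3 + 5*a^2*b + 3*a*b^2 - 5*a*c^2 - b^3 + b*c^2 := by
  have hb : 0 ≤ b := (abs_nonneg c).trans hbc
  have hc : c^2 ≤ b^2 := sq_le_sq' (abs_le.mp hbc).1 (abs_le.mp hbc).2
  -- every summand is nonnegative because `c² ≤ b² ≤ a b`
  have hsplit : a^3 + 5*a^2*b + 3*a*b^2 - 5*a*c^2 - b^3 + b*c^2 =
      a^3 + b * (a^2 - b^2) + 4 * a * (a * b - c^2) + a * (3 * b^2 - c^2) + b * c^2 := by
    ring
  have hsq : b^2 ≤ a^2 := pow_le_pow_left₀ hb hab 2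
  have hbb : b^2 ≤ a * b := by nlinarith
  rw [hsplit]
  linarith [pow_pos ha 3, mul_nonneg hb (sub_nonneg.mpr hsq),
    mul_nonneg ha.le (sub_nonneg.mpr (hc.trans hbb)),
    mul_nonneg ha.le (by nlinarith : (0 : ℝ) ≤ 3 * b^2 - c^2), mul_nonneg hb (sq_nonneg c)]

theorem tetrahedral_numerators_nonneg {a b c : ℝ} (hab : b ≤ a) (hbc : |c| ≤ b) :
    0 ≤ (a - b) * (a + b + c) * (a + b - c) ∧ 0 ≤ a * (a + b - c) * (b + c) ∧
      0 ≤ a * (a + b + c) * (b - c) := by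
  obtain ⟨hcb, hcb'⟩ := abs_le.mp hbc
  have ha : 0 ≤ a := by linarith
  have : 0 ≤ a - b := by linarith
  have : 0 ≤ a + b + c := by linarith
  have : 0 ≤ a + b - c := by linarith
  have : 0 ≤ b + c := by linarith
  have : 0 ≤ b - c := by linarith
  exact ⟨by positivity, by positivity, by positivity⟩

theorem tetrahedral_scale_pos {a b c : ℝ} (hab : b ≤ a) (hb : 0 ≤ b) (ha : 0 < a) :
    0 < a^3 + a^2*b + a*b^2 + b^3 + (a - b) * c^2 := by
  have := mul_nonneg (sub_nonneg.mpr hab) (sq_nonneg c)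
  positivity

/-- A vertex `w = (a,b,c)` of the orbit polytope of the pure rotational
tetrahedral group is, up to a positive factor, a convex combination of its five
neighbours `w₁ = (a,−b,−c)`, `w₂ = (b,c,a)`, `w₃ = (c,a,b)`, `w₄ = (b,−c,−a)`,
`w₅ = (−c,a,−b)`, with weights `x₁, x₂, x₂, x₃, x₃` given by the stated rational
expressions, where `D = a³+5a²b+3ab²−5ac²−b³+bc² > 0`, the weights are
nonnegative, and `x₁ + 2(x₂+x₃) = 1`. -/
theorem tetrahedral_orbit_weights (a b c : ℝ)
    (hab : b ≤ a) (hbc : |c| ≤ b) (ha : 0 < a)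
    (w₁ w₂ w₃ w₄ w₅ : Fin 3 → ℝ)
    (hw₁ : w₁ = ![a, -b, -c]) (hw₂ : w₂ = ![b, c, a]) (hw₃ : w₃ = ![c, a, b])
    (hw₄ : w₄ = ![b, -c, -a]) (hw₅ : w₅ = ![-c, a, -b])
    (D x₁ x₂ x₃ : ℝ)
    (hD : D = a^3 + 5*a^2*b + 3*a*b^2 - 5*a*c^2 - b^3 + b*c^2)
    (hx₁ : x₁ = (a - b) * (a + b + c) * (a + b - c) / D)
    (hx₂ : x₂ = a * (a + b - c) * (b + c) / D)
    (hx₃ : x₃ = a * (a + b + c) * (b - c) / D) :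
    0 < D ∧ 0 ≤ x₁ ∧ 0 ≤ x₂ ∧ 0 ≤ x₃ ∧ x₁ + 2 * (x₂ + x₃) = 1 ∧
    ∃ μ : ℝ, 0 < μ ∧
      ![a, b, c] = μ • (x₁ • w₁ + x₂ • (w₂ + w₃) + x₃ • (w₄ + w₅)) := by
  have hDpos : 0 < D := hD ▸ tetrahedral_denom_pos hab hbc ha
  obtain ⟨hN₁, hN₂, hN₃⟩ := tetrahedral_numerators_nonneg hab hbc
  have hE := tetrahedral_scale_pos (c := c) hab ((abs_nonneg c).trans hbc) ha
  set E := a^3 + a^2*b + a*b^2 + b^3 + (a - b) * c^2 with hE_def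
  subst hx₁ hx₂ hx₃ hw₁ hw₂ hw₃ hw₄ hw₅
  refine ⟨hDpos, div_nonneg hN₁ hDpos.le, div_nonneg hN₂ hDpos.le, div_nonneg hN₃ hDpos.le, ?_,
    D / E, div_pos hDpos hE, ?_⟩
  · rw [← add_div, mul_div_assoc', ← add_div, tetrahedral_numerators_sum, ← hD, div_self hDpos.ne']
  · simp only [div_eq_inv_mul _ D, mul_smul D⁻¹, ← smul_add, tetrahedral_numerators_combination]
    rw [← hE_def, smul_smul, smul_smul, show D / E * D⁻¹ * E = 1 by field_simp, one_smul]
end
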